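/- arXiv:2509.03023 — 6 statements merged into one kernel-verified Lean document; each statement's English description precedes it below -/
import Mathlib

section
/- Let (X,κ) be a digital image. There exists a continuous map f : X → X with f ≠ id_X such that f is 2-homotopic to id_X if and only if there exist points a, b ∈ X with a ≠ b and N(a) ⊆ N(b). -/
/-- Points of the digital plane. -/
abbrev Pt : Type := ℤ × ℤ

/-- `c_i`-adjacency on `ℤ²` (for `i = 1` or `i = 2`). -/
def cAdj (i : ℕ) (x y : Pt) : Prop :=
  if i = 1 then |x.1 - y.1| + |x.2 - y.2| ≤ 1
  else |x.1 - y.1| ≤ 1 ∧ |x.2 - y.2| ≤ 1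

/-- The adjacency induced on a subset of `ℤ²`. -/
def subAdj (i : ℕ) (X : Set Pt) (x y : X) : Prop := cAdj i x.1 y.1

/-- Digital continuity of a map between digital images. -/
def DigCont {α β : Type} (κ : α → α → Prop) (δ : β → β → Prop) (f : α → β) : Prop :=
  ∀ x y, κ x y → δ (f x) (f y)

/-- The standard (`c_1`) adjacency on `ℕ`, used for digital intervals. -/
def natAdj (s t : ℕ) : Prop := s = t ∨ s + 1 = t ∨ t + 1 = s

/-- The two normal product adjacencies on `α × ℕ`. -/
def prodAdj (i : ℕ) {α : Type} (κ : α → α → Prop) (p q : α × ℕ) : Prop :=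
  if i = 1 then (κ p.1 q.1 ∧ p.2 = q.2) ∨ (p.1 = q.1 ∧ natAdj p.2 q.2)
  else κ p.1 q.1 ∧ natAdj p.2 q.2

/-- `f` and `g` are `i`-homotopic: there is a continuous
`H : X ×_i [0,m]_ℤ → Y` with `H(·,0) = f` and `H(·,m) = g`. -/
def Homotopic (i : ℕ) {α β : Type} (κ : α → α → Prop) (δ : β → β → Prop)
    (f g : α → β) : Prop :=
  ∃ (m : ℕ) (H : α → ℕ → β),
    (∀ x, H x 0 = f x) ∧ (∀ x, H x m = g x) ∧
    (∀ x y s t, s ≤ m → t ≤ m → prodAdj i κ (x, s) (y, t) → δ (H x s) (H y t))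

/-- `i`-homotopy equivalence of digital images. -/
def HtpyEquiv (i : ℕ) {α β : Type} (κ : α → α → Prop) (δ : β → β → Prop) : Prop :=
  ∃ (f : α → β) (g : β → α),
    DigCont κ δ f ∧ DigCont δ κ g ∧
    Homotopic i κ κ (g ∘ f) id ∧ Homotopic i δ δ (f ∘ g) id

/-- Homotopy equivalence of digital pictures `(X, c_i, c_j)` and `(Y, c_i, c_j)`. -/
def PicHtpyEquiv (i j : ℕ) (X Y : Set Pt) : Prop :=
  HtpyEquiv i (subAdj i X) (subAdj i Y) ∧ HtpyEquiv j (subAdj j Xᶜ) (subAdj j Yᶜ)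

/-- Isomorphism of digital images: a continuous bijection with continuous inverse. -/
def DigIso {α β : Type} (κ : α → α → Prop) (δ : β → β → Prop) : Prop :=
  ∃ e : α ≃ β, DigCont κ δ ⇑e ∧ DigCont δ κ ⇑e.symm

/-- Isomorphism of digital pictures. -/
def PicIso (i j : ℕ) (X Y : Set Pt) : Prop :=
  DigIso (subAdj i X) (subAdj i Y) ∧ DigIso (subAdj j Xᶜ) (subAdj j Yᶜ)

/-- `x` and `y` are joined by a `c_i`-path inside `A`. -/
def ChainIn (i : ℕ) (A : Set Pt) (x y : Pt) : Prop :=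
  ∃ (n : ℕ) (c : ℕ → Pt), c 0 = x ∧ c n = y ∧ (∀ k ≤ n, c k ∈ A) ∧
    ∀ k < n, cAdj i (c k) (c (k + 1))

/-- `A` is `c_i`-connected. -/
def Conn (i : ℕ) (A : Set Pt) : Prop := ∀ x ∈ A, ∀ y ∈ A, ChainIn i A x y

/-- The `c_i`-component of `p` in `A`. -/
def compOf (i : ℕ) (A : Set Pt) (p : Pt) : Set Pt := {y | ChainIn i A p y}

/-- The digital picture `(X, c_i, c_j)` has no hole: every `c_j`-component
of the complement of `X` is infinite. -/
def NoHole (j : ℕ) (X : Set Pt) : Prop := ∀ p ∈ Xᶜ, (compOf j Xᶜ p).Infinite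

/-- The row of `X` at height `k`. -/
def rowOf (X : Set Pt) (k : ℤ) : Set Pt := X ∩ {p | p.2 = k}

/-- `r` is a row component of `(X, c_i)`: a `c_i`-component of a row of `X`. -/
def IsRowComp (i : ℕ) (X : Set Pt) (r : Set Pt) : Prop :=
  ∃ (k : ℤ) (p : Pt), p ∈ rowOf X k ∧ r = compOf i (rowOf X k) p

/-- Two subsets of `ℤ²` are `c_i`-adjacent. -/
def setAdj (i : ℕ) (A B : Set Pt) : Prop := ∃ a ∈ A, ∃ b ∈ B, cAdj i a b

/-- The edge relation of the row component graph `R(X, c_i)`: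
two distinct row components joined when they are `c_i`-adjacent. -/
def rcgAdj (i : ℕ) (X : Set Pt) (r s : Set Pt) : Prop :=
  IsRowComp i X r ∧ IsRowComp i X s ∧ r ≠ s ∧ setAdj i r s

/-- The row component graph `R(X, c_i)` is acyclic: there is no cycle of
`k ≥ 3` distinct row components with consecutive ones adjacent. -/
def RCGAcyclic (i : ℕ) (X : Set Pt) : Prop :=
  ¬ ∃ (k : ℕ) (r : ℕ → Set Pt), 3 ≤ k ∧
    (∀ t < k, IsRowComp i X (r t)) ∧
    (∀ t < k, ∀ t' < k, r t = r t' → t = t') ∧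
    (∀ t, t + 1 < k → rcgAdj i X (r t) (r (t + 1))) ∧
    rcgAdj i X (r (k - 1)) (r 0)

/-- The row component graph `R(X, c_i)` is connected. -/
def RCGConnected (i : ℕ) (X : Set Pt) : Prop :=
  ∀ r s : Set Pt, IsRowComp i X r → IsRowComp i X s →
    Relation.ReflTransGen (rcgAdj i X) r s

/-- A digital image is `i`-contractible: the identity is `i`-homotopic to a constant map. -/
def Contractible (i : ℕ) {α : Type} (κ : α → α → Prop) : Prop :=
  ∃ x₀ : α, Homotopic i κ κ id (fun _ => x₀)

/-- Row-convexity. -/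
def RowConvex (X : Set Pt) : Prop :=
  ∀ a b c k : ℤ, (a, k) ∈ X → (c, k) ∈ X → a ≤ b → b ≤ c → (b, k) ∈ X

/-- Column-convexity. -/
def ColConvex (X : Set Pt) : Prop :=
  ∀ a b c k : ℤ, (k, a) ∈ X → (k, c) ∈ X → a ≤ b → b ≤ c → (k, b) ∈ X

/-- The row-convex hull of `X`. -/
def Hr (X : Set Pt) : Set Pt := ⋂₀ {S | RowConvex S ∧ X ⊆ S}

/-- The column-convex hull of `X`. -/
def Hc (X : Set Pt) : Set Pt := ⋂₀ {S | ColConvex S ∧ X ⊆ S}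

/-- The rc-convex hull of `X`. -/
def Hrc (X : Set Pt) : Set Pt := ⋂₀ {S | (RowConvex S ∧ ColConvex S) ∧ X ⊆ S}

/-- A loop of length `m` inside `Z`: a continuous `γ : [0,m]_ℤ → Z` with `γ 0 = γ m`. -/
def LoopIn (j : ℕ) (Z : Set Pt) (m : ℕ) (γ : ℕ → Pt) : Prop :=
  γ 0 = γ m ∧ (∀ t ≤ m, γ t ∈ Z) ∧ ∀ t < m, cAdj j (γ t) (γ (t + 1))

/-- The loop `γ` is `j`-contractible in `Z`: there is a `j`-homotopy in `Z` from `γ`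
to the constant loop at `γ 0` whose every stage is a loop based at `γ 0`. -/
def LoopContractibleIn (j : ℕ) (Z : Set Pt) (m : ℕ) (γ : ℕ → Pt) : Prop :=
  ∃ (K : ℕ) (H : ℕ → ℕ → Pt),
    (∀ t, H t 0 = γ t) ∧ (∀ t, H t K = γ 0) ∧
    (∀ k ≤ K, H 0 k = γ 0 ∧ H m k = γ 0) ∧
    (∀ t ≤ m, ∀ k ≤ K, H t k ∈ Z) ∧
    (∀ s t k l, s ≤ m → t ≤ m → k ≤ K → l ≤ K →
      prodAdj j natAdj (s, k) (t, l) → cAdj j (H s k) (H t l))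

/-- The union of the infinite `c_j`-components of the complement of `X`. -/
def InfPart (j : ℕ) (X : Set Pt) : Set Pt := {p | p ∈ Xᶜ ∧ (compOf j Xᶜ p).Infinite}

/-- The outer perimeter of the digital picture `(X, c_i, c_j)`: the least length of a
non-`j`-contractible loop in the infinite component of the complement of `X`, or `1`
if no such loop exists.  (It depends only on `j` and `X`.) -/
noncomputable def outerPerim (j : ℕ) (X : Set Pt) : ℕ := by
  classical
  exact if (∃ m γ, LoopIn j (InfPart j X) m γ ∧ ¬ LoopContractibleIn j (InfPart j X) m γ)
    then sInf {m | ∃ γ, LoopIn j (InfPart j X) m γ ∧ ¬ LoopContractibleIn j (InfPart j X) m γ}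
    else 1

/-- The digital rectangle `I_{n,m} = [1,n]_ℤ × [1,m]_ℤ`. -/
def Irect (n m : ℤ) : Set Pt := Set.Icc 1 n ×ˢ Set.Icc 1 m

/-- A finite digital image is `i`-reducible when it is `i`-homotopy equivalent to a
digital image with strictly fewer points. -/
def Reducible (i : ℕ) {α : Type} (κ : α → α → Prop) : Prop :=
  ∃ (β : Type) (δ : β → β → Prop), Reflexive δ ∧ Symmetric δ ∧ Finite β ∧
    Nat.card β < Nat.card α ∧ HtpyEquiv i κ δ

/-- There exists a continuous map `f : X → X` with `f ≠ id` that is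
2-homotopic to the identity iff there exist distinct points `a, b` with `N(a) ⊆ N(b)`. -/
theorem stmt0 {α : Type} (κ : α → α → Prop) (hrefl : Reflexive κ) (hsymm : Symmetric κ) :
    (∃ f : α → α, DigCont κ κ f ∧ f ≠ id ∧ Homotopic 2 κ κ f id) ↔
      ∃ a b : α, a ≠ b ∧ ∀ x, κ a x → κ b x := by
  classical
  constructor
  · rintro ⟨f, hc, hne, m, H, h0, hm, hH⟩
    -- P k : the stage k of the homotopy is not the identity
    set P : ℕ → Prop := fun k => (fun x => H x k) ≠ id with hP
    have hP0 : P 0 := fun h =>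
      hne (funext fun x => (h0 x).symm.trans (congrFun h x))
    have hPm : ¬ P m := by
      simp only [hP, not_not]
      funext x; exact hm x
    set k := Nat.findGreatest P m with hk
    have hkle : k ≤ m := Nat.findGreatest_le m
    have hPk : P k := Nat.findGreatest_spec (Nat.zero_le m) hP0
    have hkm : k < m := lt_of_le_of_ne hkle (fun h => hPm (h ▸ hPk))
    have hPk1 : ¬ P (k + 1) := Nat.findGreatest_is_greatest (Nat.lt_succ_self k) hkm
    have hid1 : ∀ x, H x (k + 1) = x := by
      have := not_not.mp hPk1
      intro x; exact congrFun this x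
    obtain ⟨a, ha⟩ : ∃ a, H a k ≠ a := by
      by_contra h
      push_neg at h
      exact hPk (funext h)
    refine ⟨a, H a k, fun h => ha h.symm, fun x hx => ?_⟩
    have := hH a x k (k + 1) hkle hkm
      (by
        unfold prodAdj
        simp only [if_neg (by norm_num : (2:ℕ) ≠ 1)]
        exact ⟨hx, Or.inr (Or.inl rfl)⟩)
    rw [hid1 x] at this
    exact this
  · rintro ⟨a, b, hab, hN⟩
    set f : α → α := fun x => if x = a then b else x with hf
    have key : ∀ x y, κ x y → κ (f x) y := by
      intro x y hxy
      by_cases hx : x = a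
      · simp only [hf, if_pos hx]
        exact hN y (hx ▸ hxy)
      · simpa only [hf, if_neg hx] using hxy
    refine ⟨f, ?_, ?_, 1, fun x t => if t = 0 then f x else x, fun x => by simp, fun x => by simp, ?_⟩
    · intro x y hxy
      by_cases hy : y = a
      · subst hy
        exact hsymm (key y (f x) (hsymm (key x y hxy)))
      · simpa only [hf, if_neg hy] using key x y hxy
    · intro h
      apply hab
      have := congrFun h a
      simpa [hf] using this.symm
    · intro x y s t hs ht hadj
      unfold prodAdj at hadj
      rw [if_neg (by norm_num : (2:ℕ) ≠ 1)] at hadj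
      obtain ⟨hxy, _⟩ := hadj
      show κ (if s = 0 then f x else x) (if t = 0 then f y else y)
      by_cases hs0 : s = 0 <;> by_cases ht0 : t = 0
      · rw [if_pos hs0, if_pos ht0]
        exact key x (f y) (hsymm (key y x (hsymm hxy)))
      · rw [if_pos hs0, if_neg ht0]
        exact key x y hxy
      · rw [if_neg hs0, if_pos ht0]
        exact hsymm (key y x (hsymm hxy))
      · rw [if_neg hs0, if_neg ht0]
        exact hxy
end

section
/- Let (X,κ) be a digital image and let p, q ∈ X be points with p ≠ q and N(p) ⊆ N(q). Then X ∖ {p}, with the induced adjacency, is 2-homotopy equivalent to X. -/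
/-- if `p ≠ q` and `N(p) ⊆ N(q)`, then `X ∖ {p}` (with the induced
adjacency) is 2-homotopy equivalent to `X`. -/
theorem stmt2 {α : Type} (κ : α → α → Prop) (hrefl : Reflexive κ) (hsymm : Symmetric κ)
    (p q : α) (hpq : p ≠ q) (hN : ∀ x, κ p x → κ q x) :
    HtpyEquiv 2 (fun a b : ({p}ᶜ : Set α) => κ a.1 b.1) κ := by
  classical
  have hq : q ∈ ({p}ᶜ : Set α) := by simp [Ne.symm hpq]
  set r : α → α := fun x => if x = p then q else x with hr
  have hrmem : ∀ x, r x ∈ ({p}ᶜ : Set α) := by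
    intro x
    by_cases h : x = p <;> simp [hr, h, hq, Ne.symm hpq, h]
  have key : ∀ x y, κ x y → κ (r x) (r y) := by
    intro x y hxy
    by_cases hx : x = p <;> by_cases hy : y = p <;> simp [hr, hx, hy]
    · exact hrefl q
    · exact hN y (hx ▸ hxy)
    · exact hsymm (hN x (hsymm (hy ▸ hxy)))
    · exact hxy
  have key2 : ∀ x y, κ x y → κ (r x) y := by
    intro x y hxy
    by_cases hx : x = p <;> simp [hr, hx]
    · exact hN y (hx ▸ hxy)
    · exact hxy
  refine ⟨fun a => a.1, fun x => ⟨r x, hrmem x⟩, ?_, ?_, ?_, ?_⟩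
  · intro x y h; exact h
  · intro x y h; exact key x y h
  · refine ⟨0, fun a _ => a, fun a => ?_, fun a => rfl, ?_⟩
    · have : a.1 ≠ p := a.2
      simp [Function.comp, hr, this]
    · intro x y s t _ _ hadj
      exact hadj.1
  · refine ⟨1, fun x s => if s = 0 then r x else x, fun x => by simp [Function.comp], 
      fun x => by simp, ?_⟩
    intro x y s t hs ht hadj
    have hxy : κ x y := hadj.1
    by_cases h0 : s = 0 <;> by_cases h1 : t = 0 <;> simp [h0, h1]
    · exact key x y hxy
    · exact key2 x y hxy
    · exact hsymm (key2 y x (hsymm hxy))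
    · exact hxy
end

section
/- Let {i,j} = {1,2} and let n, m, k, l ≥ 1 be integers. The digital rectangles (I_{n,m},c_i,c_j) and (I_{k,l},c_i,c_j) are isomorphic as digital pictures if and only if {n,m} = {k,l} (as unordered pairs). -/
/-! A digital isomorphism preserves the number of points and the number of ordered pairs of
adjacent points. For `I_{n,m}` these are `nm` and, counting pairs by their difference vector,
`5nm - 2n - 2m` for `c_1` and `(3n - 2)(3m - 2)` for `c_2`; either way they determine `n + m`
and `nm`, hence `{n, m}`. Conversely, swapping coordinates maps `I_{n,m}` onto `I_{m,n}`. -/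

open Finset

instance (i : ℕ) (x y : Pt) : Decidable (cAdj i x y) := by
  unfold cAdj; infer_instance

lemma cAdj_swap {i : ℕ} {x y : Pt} (h : cAdj i x y) : cAdj i x.swap y.swap := by
  unfold cAdj at h ⊢
  split_ifs at h ⊢
  · simpa only [Prod.fst_swap, Prod.snd_swap, add_comm] using h
  · exact h.symm

/-- Differences `x - y` of `c_i`-adjacent points (`cAdj i` is `c_2`-adjacency for all `i ≠ 1`). -/
def adjOffsets (i : ℕ) : Finset Pt :=
  if i = 1 then {(0, 0), (1, 0), (-1, 0), (0, 1), (0, -1)} else {-1, 0, 1} ×ˢ {-1, 0, 1}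

lemma cAdj_iff_sub_mem_adjOffsets (i : ℕ) (x y : Pt) : cAdj i x y ↔ x - y ∈ adjOffsets i := by
  unfold cAdj adjOffsets
  split_ifs
  · simp only [mem_insert, mem_singleton, Prod.ext_iff, Prod.fst_sub, Prod.snd_sub,
      Int.abs_eq_natAbs]
    omega
  · simp only [mem_product, mem_insert, mem_singleton, Prod.fst_sub, Prod.snd_sub,
      Int.abs_eq_natAbs]
    omega

lemma card_filter_sub_eq (n d : ℤ) :
    #{p ∈ Icc 1 n ×ˢ Icc 1 n | p.1 - p.2 = d} = (n - |d|).toNat := by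
  have himage : {p ∈ Icc 1 n ×ˢ Icc 1 n | p.1 - p.2 = d}
      = (Icc (max 1 (1 - d)) (min n (n - d))).image fun c => (c + d, c) := by
    ext ⟨a, c⟩
    simp only [mem_filter, mem_product, mem_Icc, mem_image, Prod.mk.injEq]
    constructor
    · rintro ⟨⟨⟨ha1, ha2⟩, hc1, hc2⟩, hd⟩
      exact ⟨c, by omega, by omega, rfl⟩
    · rintro ⟨b, ⟨hb1, hb2⟩, rfl, rfl⟩
      omega
  rw [himage, card_image_of_injective _ fun a b h => (Prod.ext_iff.1 h).2, Int.card_Icc,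
    Int.abs_eq_natAbs]
  omega

noncomputable def rectFinset (n m : ℤ) : Finset Pt := Icc 1 n ×ˢ Icc 1 m

lemma coe_rectFinset (n m : ℤ) : (rectFinset n m : Set Pt) = Irect n m := by
  simp only [rectFinset, Irect, coe_product, coe_Icc]

lemma card_filter_sub_eq_rectFinset (n m : ℤ) (v : Pt) :
    #{p ∈ rectFinset n m ×ˢ rectFinset n m | p.1 - p.2 = v}
      = (n - |v.1|).toNat * (m - |v.2|).toNat := by
  rw [← card_filter_sub_eq n v.1, ← card_filter_sub_eq m v.2, ← card_product]
  refine card_bij' (fun p _ => ((p.1.1, p.2.1), (p.1.2, p.2.2)))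
    (fun q _ => ((q.1.1, q.2.1), (q.1.2, q.2.2))) ?_ ?_ (fun _ _ => rfl) (fun _ _ => rfl)
  · rintro ⟨⟨a, b⟩, ⟨c, d⟩⟩ hp
    simp only [rectFinset, mem_filter, mem_product, mem_Icc, Prod.ext_iff, Prod.fst_sub,
      Prod.snd_sub] at hp ⊢
    tauto
  · rintro ⟨⟨a, c⟩, ⟨b, d⟩⟩ hq
    simp only [rectFinset, mem_filter, mem_product, mem_Icc, Prod.ext_iff, Prod.fst_sub,
      Prod.snd_sub] at hq ⊢
    tauto

lemma card_adjPairs_rectFinset (i : ℕ) (n m : ℤ) :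
    #{p ∈ rectFinset n m ×ˢ rectFinset n m | cAdj i p.1 p.2}
      = ∑ v ∈ adjOffsets i, (n - |v.1|).toNat * (m - |v.2|).toNat := by
  rw [card_eq_sum_card_fiberwise (f := fun p : Pt × Pt => p.1 - p.2) (t := adjOffsets i)
    fun p hp => (cAdj_iff_sub_mem_adjOffsets i _ _).1 (mem_filter.1 hp).2]
  refine sum_congr rfl fun v hv => ?_
  rw [← card_filter_sub_eq_rectFinset, filter_filter]
  congr 1
  refine filter_congr fun p _ => ⟨And.right, fun h => ⟨?_, h⟩⟩
  rwa [cAdj_iff_sub_mem_adjOffsets, h]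

lemma card_adjPairs_rectFinset_eq (i : ℕ) {n m : ℤ} (hn : 1 ≤ n) (hm : 1 ≤ m) :
    (#{p ∈ rectFinset n m ×ˢ rectFinset n m | cAdj i p.1 p.2} : ℤ)
      = if i = 1 then 5 * n * m - 2 * n - 2 * m else (3 * n - 2) * (3 * m - 2) := by
  have hn' : max n 0 = n ∧ ((n.toNat - 1 : ℕ) : ℤ) = n - 1 := ⟨by omega, by omega⟩
  have hm' : max m 0 = m ∧ ((m.toNat - 1 : ℕ) : ℤ) = m - 1 := ⟨by omega, by omega⟩
  rw [card_adjPairs_rectFinset, adjOffsets]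
  split_ifs
  · simp [hn', hm']
    ring
  · simp [hn', hm', sum_product, ← mul_sum, ← sum_mul]
    ring

lemma natCard_Irect {n m : ℤ} (hn : 1 ≤ n) (hm : 1 ≤ m) :
    (Nat.card (Irect n m) : ℤ) = n * m := by
  rw [← coe_rectFinset, Nat.card_coe_set_eq, Set.ncard_coe_finset, rectFinset, card_product,
    Int.card_Icc, Int.card_Icc]
  push_cast
  rw [Int.toNat_of_nonneg (by omega), Int.toNat_of_nonneg (by omega)]
  ring

lemma natCard_adjPairs_Irect (i : ℕ) (n m : ℤ) :
    Nat.card {p : Irect n m × Irect n m // subAdj i (Irect n m) p.1 p.2}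
      = #{p ∈ rectFinset n m ×ˢ rectFinset n m | cAdj i p.1 p.2} := by
  have hset : {q : Pt × Pt | q ∈ Irect n m ×ˢ Irect n m ∧ cAdj i q.1 q.2}
      = ↑{p ∈ rectFinset n m ×ˢ rectFinset n m | cAdj i p.1 p.2} := by
    ext q
    simp only [coe_filter, Set.mem_prod, ← coe_rectFinset, mem_coe, mem_product]
  calc Nat.card {p : Irect n m × Irect n m // subAdj i (Irect n m) p.1 p.2}
      = Nat.card {q : ↥(Irect n m ×ˢ Irect n m) // cAdj i q.1.1 q.1.2} :=
        Nat.card_congr ((Equiv.Set.prod _ _).symm.subtypeEquiv fun _ => Iff.rfl)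
    _ = Nat.card {q : Pt × Pt | q ∈ Irect n m ×ˢ Irect n m ∧ cAdj i q.1 q.2} :=
        Nat.card_congr <|
          Equiv.subtypeSubtypeEquivSubtypeInter (· ∈ Irect n m ×ˢ Irect n m)
            fun q => cAdj i q.1 q.2
    _ = _ := by rw [hset, Nat.card_coe_set_eq, Set.ncard_coe_finset]

section DigIso

variable {α β : Type} {κ : α → α → Prop} {δ : β → β → Prop}

lemma DigIso.natCard_eq (h : DigIso κ δ) : Nat.card α = Nat.card β :=
  let ⟨e, _, _⟩ := h
  Nat.card_congr e

lemma DigIso.natCard_adjPairs_eq (h : DigIso κ δ) :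
    Nat.card {p : α × α // κ p.1 p.2} = Nat.card {p : β × β // δ p.1 p.2} := by
  obtain ⟨e, he, he'⟩ := h
  refine Nat.card_congr <| (e.prodCongr e).subtypeEquiv fun p => ⟨he _ _, fun hp => ?_⟩
  simpa using he' _ _ hp

lemma DigIso.refl : DigIso κ κ :=
  ⟨Equiv.refl α, fun _ _ h => h, fun _ _ h => h⟩

end DigIso

lemma digIso_subAdj_of_swap_mem_iff (i : ℕ) {X Y : Set Pt}
    (h : ∀ p : Pt, p.swap ∈ Y ↔ p ∈ X) :
    DigIso (subAdj i X) (subAdj i Y) :=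
  ⟨(Equiv.prodComm ℤ ℤ).subtypeEquiv fun p => (h p).symm,
    fun _ _ => cAdj_swap, fun _ _ => cAdj_swap⟩

lemma picIso_Irect_swap (i j : ℕ) (n m : ℤ) : PicIso i j (Irect n m) (Irect m n) := by
  have h : ∀ p : Pt, p.swap ∈ Irect m n ↔ p ∈ Irect n m := fun p => and_comm
  exact ⟨digIso_subAdj_of_swap_mem_iff i h, digIso_subAdj_of_swap_mem_iff j fun p => (h p).not⟩

lemma eq_and_eq_or_eq_and_eq_of_add_eq_of_mul_eq {R : Type*} [CommRing R] [NoZeroDivisors R]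
    {a b c d : R} (hadd : a + b = c + d) (hmul : a * b = c * d) :
    (a = c ∧ b = d) ∨ (a = d ∧ b = c) := by
  have h : (c - a) * (c - b) = 0 := by linear_combination hmul - c * hadd
  rcases mul_eq_zero.1 h with h | h
  · exact Or.inl ⟨(sub_eq_zero.1 h).symm, by linear_combination hadd + h⟩
  · exact Or.inr ⟨by linear_combination hadd + h, (sub_eq_zero.1 h).symm⟩

theorem stmt4_general (i j : ℕ)
    (n m k l : ℤ) (hn : 1 ≤ n) (hm : 1 ≤ m) (hk : 1 ≤ k) (hl : 1 ≤ l) :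
    PicIso i j (Irect n m) (Irect k l) ↔ ((n = k ∧ m = l) ∨ (n = l ∧ m = k)) := by
  constructor
  · rintro ⟨hiso, -⟩
    have hmul : n * m = k * l := by
      rw [← natCard_Irect hn hm, ← natCard_Irect hk hl, hiso.natCard_eq]
    have hadj := congrArg (Nat.cast : ℕ → ℤ) hiso.natCard_adjPairs_eq
    rw [natCard_adjPairs_Irect, natCard_adjPairs_Irect, card_adjPairs_rectFinset_eq i hn hm,
      card_adjPairs_rectFinset_eq i hk hl] at hadj
    have hadd : n + m = k + l := by split_ifs at hadj <;> linarith
    exact eq_and_eq_or_eq_and_eq_of_add_eq_of_mul_eq hadd hmul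
  · rintro (⟨rfl, rfl⟩ | ⟨rfl, rfl⟩)
    · exact ⟨DigIso.refl, DigIso.refl⟩
    · exact picIso_Irect_swap i j _ _

/-- digital rectangles `(I_{n,m},c_i,c_j)` and `(I_{k,l},c_i,c_j)` are
isomorphic as digital pictures iff `{n,m} = {k,l}` as unordered pairs. -/
theorem stmt4 (i j : ℕ) (hij : (i = 1 ∧ j = 2) ∨ (i = 2 ∧ j = 1))
    (n m k l : ℤ) (hn : 1 ≤ n) (hm : 1 ≤ m) (hk : 1 ≤ k) (hl : 1 ≤ l) :
    PicIso i j (Irect n m) (Irect k l) ↔ ((n = k ∧ m = l) ∨ (n = l ∧ m = k)) :=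
  stmt4_general i j n m k l hn hm hk hl
end

section
/- Let X ⊆ ℤ² be a finite set and i ∈ {1,2}. The number of c_i-components of X equals the number of connected components of the row component graph R(X,c_i). In particular, if X is c_i-connected then R(X,c_i) is connected. -/
/-!
Sending a point of `X` to its row component collapses each row component, which is
`c_i`-connected inside `X`, to a single vertex of `R(X, c_i)`, and sends `c_i`-adjacent points
to equal or adjacent row components; conversely, adjacent row components contain adjacent
points. Hence `c_i`-paths in `X` and paths in `R(X, c_i)` correspond, and the map induces a
bijection between the two sets of components.
-/

open Relation

noncomputable def Quot.equivOfSurjective {α β : Type*} {r : α → α → Prop} {s : β → β → Prop}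
    (π : α → β) (hπ : Function.Surjective π) (hr : ∀ a b, r a b → EqvGen s (π a) (π b))
    (hfib : ∀ a b, π a = π b → EqvGen r a b) (hs : ∀ a b, s (π a) (π b) → EqvGen r a b) :
    Quot r ≃ Quot s := by
  refine Equiv.ofBijective (Quot.lift (fun a => Quot.mk s (π a))
    fun a b h => Quot.eqvGen_sound (hr a b h)) ⟨?_, ?_⟩
  · have lift_eqvGen : ∀ x y, EqvGen s x y → ∀ a b, π a = x → π b = y → EqvGen r a b := by
      intro x y h
      induction h with
      | rel x y hxy =>
        rintro a b rfl rfl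
        exact hs a b hxy
      | refl x =>
        rintro a b rfl hb
        exact hfib a b hb.symm
      | symm x y _ ih => exact fun a b ha hb => (ih b a hb ha).symm
      | trans x y z _ _ ih₁ ih₂ =>
        intro a b ha hb
        obtain ⟨c, rfl⟩ := hπ y
        exact (ih₁ a c ha rfl).trans _ _ _ (ih₂ c b rfl hb)
    rintro ⟨a⟩ ⟨b⟩ h
    exact Quot.eqvGen_sound (lift_eqvGen _ _ (Quot.eqvGen_exact h) a b rfl rfl)
  · rintro ⟨y⟩
    obtain ⟨a, rfl⟩ := hπ y
    exact ⟨Quot.mk r a, rfl⟩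

section Chains

variable {i : ℕ} {A : Set Pt} {x y : Pt}

lemma ChainIn.mem_left (h : ChainIn i A x y) : x ∈ A := by
  obtain ⟨n, c, rfl, -, hmem, -⟩ := h
  exact hmem 0 (Nat.zero_le n)

lemma ChainIn.mem_right (h : ChainIn i A x y) : y ∈ A := by
  obtain ⟨n, c, -, rfl, hmem, -⟩ := h
  exact hmem n le_rfl

lemma ChainIn.mono {B : Set Pt} (h : ChainIn i A x y) (hAB : A ⊆ B) : ChainIn i B x y := by
  obtain ⟨n, c, h0, hn, hmem, hadj⟩ := h
  exact ⟨n, c, h0, hn, fun k hk => hAB (hmem k hk), hadj⟩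

lemma ChainIn.reflTransGen_subAdj (h : ChainIn i A x y) (hx : x ∈ A) (hy : y ∈ A) :
    ReflTransGen (subAdj i A) ⟨x, hx⟩ ⟨y, hy⟩ := by
  obtain ⟨n, c, rfl, rfl, hmem, hadj⟩ := h
  induction n with
  | zero => exact .refl
  | succ n ih =>
    exact (ih (hmem n (by omega)) (fun k hk => hmem k (by omega))
      (fun k hk => hadj k (by omega))).tail (hadj n (by omega))

end Chains

def rowCompOf (i : ℕ) (X : Set Pt) (p : Pt) : Set Pt := compOf i (rowOf X p.2) p

section RowComponents

variable {i : ℕ} {X : Set Pt} {p q : Pt}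

lemma mem_rowCompOf_self (hp : p ∈ X) : p ∈ rowCompOf i X p :=
  ⟨0, fun _ => p, rfl, rfl, fun _ _ => ⟨hp, rfl⟩, fun _ h => absurd h (Nat.not_lt_zero _)⟩

lemma rowCompOf_subset : rowCompOf i X p ⊆ X := fun _ hu => hu.mem_right.1

lemma isRowComp_rowCompOf (hp : p ∈ X) : IsRowComp i X (rowCompOf i X p) :=
  ⟨p.2, p, ⟨hp, rfl⟩, rfl⟩

lemma IsRowComp.exists_eq_rowCompOf {r : Set Pt} (hr : IsRowComp i X r) :
    ∃ p ∈ X, r = rowCompOf i X p := by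
  obtain ⟨k, p, ⟨hpX, rfl⟩, rfl⟩ := hr
  exact ⟨p, hpX, rfl⟩

lemma reflTransGen_subAdj_of_mem_rowCompOf (hp : p ∈ X) (hq : q ∈ X)
    (hpq : q ∈ rowCompOf i X p) : ReflTransGen (subAdj i X) ⟨p, hp⟩ ⟨q, hq⟩ :=
  (hpq.mono Set.inter_subset_left).reflTransGen_subAdj hp hq

lemma reflTransGen_subAdj_of_rowCompOf_eq (hp : p ∈ X) (hq : q ∈ X)
    (h : rowCompOf i X p = rowCompOf i X q) : ReflTransGen (subAdj i X) ⟨p, hp⟩ ⟨q, hq⟩ :=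
  reflTransGen_subAdj_of_mem_rowCompOf hp hq (h ▸ mem_rowCompOf_self hq)

lemma rowCompOf_eq_or_rcgAdj (hp : p ∈ X) (hq : q ∈ X) (hpq : cAdj i p q) :
    rowCompOf i X p = rowCompOf i X q ∨ rcgAdj i X (rowCompOf i X p) (rowCompOf i X q) := by
  by_cases h : rowCompOf i X p = rowCompOf i X q
  · exact .inl h
  · exact .inr ⟨isRowComp_rowCompOf hp, isRowComp_rowCompOf hq, h,
      p, mem_rowCompOf_self hp, q, mem_rowCompOf_self hq, hpq⟩

lemma eqvGen_subAdj_of_rcgAdj (hp : p ∈ X) (hq : q ∈ X)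
    (h : rcgAdj i X (rowCompOf i X p) (rowCompOf i X q)) :
    EqvGen (subAdj i X) ⟨p, hp⟩ ⟨q, hq⟩ := by
  obtain ⟨-, -, -, u, hu, v, hv, huv⟩ := h
  have huX : u ∈ X := rowCompOf_subset hu
  have hvX : v ∈ X := rowCompOf_subset hv
  have hpu := EqvGen.reflTransGen_le_eqvGen _ _ _ (reflTransGen_subAdj_of_mem_rowCompOf hp huX hu)
  have hqv := EqvGen.reflTransGen_le_eqvGen _ _ _ (reflTransGen_subAdj_of_mem_rowCompOf hq hvX hv)
  exact hpu.trans _ _ _ ((EqvGen.rel (r := subAdj i X) ⟨u, huX⟩ ⟨v, hvX⟩ huv).trans _ _ _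
    (hqv.symm _ _))

lemma ChainIn.reflTransGen_rcgAdj (h : ChainIn i X p q) :
    ReflTransGen (rcgAdj i X) (rowCompOf i X p) (rowCompOf i X q) := by
  refine ReflTransGen.lift' (fun a : X => rowCompOf i X a) (fun a b hab => ?_) _ _
    (h.reflTransGen_subAdj h.mem_left h.mem_right)
  show ReflTransGen _ (rowCompOf i X a) (rowCompOf i X b)
  exact (rowCompOf_eq_or_rcgAdj a.2 b.2 hab).elim (fun h => h ▸ .refl) .single

end RowComponents

/-- Induced by sending each point of `X` to its row component. -/
noncomputable def componentsEquivRowComponents (i : ℕ) (X : Set Pt) :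
    Quot (subAdj i X) ≃ Quot (fun r s : {r : Set Pt // IsRowComp i X r} => rcgAdj i X r.1 s.1) :=
  Quot.equivOfSurjective (fun p => ⟨rowCompOf i X p, isRowComp_rowCompOf p.2⟩)
    (fun ⟨r, hr⟩ => by
      obtain ⟨p, hp, rfl⟩ := hr.exists_eq_rowCompOf
      exact ⟨⟨p, hp⟩, rfl⟩)
    (fun a b hab => (rowCompOf_eq_or_rcgAdj a.2 b.2 hab).elim
      (fun h => Subtype.ext (a1 := ⟨rowCompOf i X a, isRowComp_rowCompOf a.2⟩)
        (a2 := ⟨rowCompOf i X b, isRowComp_rowCompOf b.2⟩) h ▸ EqvGen.refl _)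
      fun h => EqvGen.rel _ _ h)
    (fun a b h => EqvGen.reflTransGen_le_eqvGen _ _ _
      (reflTransGen_subAdj_of_rowCompOf_eq a.2 b.2 (congrArg Subtype.val h)))
    (fun a b h => eqvGen_subAdj_of_rcgAdj a.2 b.2 h)

theorem stmt6_general (i : ℕ) (X : Set Pt) :
    Nat.card (Quot (fun a b : X => cAdj i a.1 b.1)) =
      Nat.card (Quot (fun r s : {r : Set Pt // IsRowComp i X r} => rcgAdj i X r.1 s.1)) ∧
    (Conn i X → RCGConnected i X) := by
  refine ⟨Nat.card_congr (componentsEquivRowComponents i X), fun hX r s hr hs => ?_⟩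
  obtain ⟨p, hp, rfl⟩ := hr.exists_eq_rowCompOf
  obtain ⟨q, hq, rfl⟩ := hs.exists_eq_rowCompOf
  exact (hX p hp q hq).reflTransGen_rcgAdj

/-- the number of `c_i`-components of `X` equals the number of connected
components of the row component graph `R(X,c_i)`; in particular if `X` is
`c_i`-connected then `R(X,c_i)` is connected. -/
theorem stmt6 (i : ℕ) (hi : i = 1 ∨ i = 2) (X : Set Pt) (hX : X.Finite) :
    Nat.card (Quot (fun a b : X => cAdj i a.1 b.1)) =
      Nat.card (Quot (fun r s : {r : Set Pt // IsRowComp i X r} => rcgAdj i X r.1 s.1)) ∧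
    (Conn i X → RCGConnected i X) :=
  stmt6_general i X
end

section
/- Let (X,c_i,c_j) be a digital picture in ℤ² with {i,j} = {1,2}. If X has no hole, then the row component graph R(X,c_i) is acyclic: there is no sequence r₁,…,r_k of k ≥ 3 distinct row components of X with r_t adjacent to r_{t+1} in R(X,c_i) for 1 ≤ t < k and r_k adjacent to r₁. -/
/-!
Suppose the row components `e 0, …, e (k - 1)` form a cycle and let `e t` lie in the highest
row. Its two neighbours in the cycle are distinct components of the row below, so that row has
a point `p ∉ X` between them, just to the right of the left neighbour. Joining consecutive
components inside `X` gives a closed `c_i`-path. The parity of its crossings with the vertical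
ray above `p` is `1`; it does not change along a `c_j`-path in the complement of `X`, which
cannot cross a `c_i`-path in `X`; and it is `0` far away from `X`. So the `c_j`-component of
`p` in the complement is finite.
-/

open Finset Relation

open Classical in
noncomputable def ind (P : Prop) : ZMod 2 := if P then 1 else 0

lemma ind_pos {P : Prop} (h : P) : ind P = 1 := by simp [ind, h]

lemma ind_neg {P : Prop} (h : ¬P) : ind P = 0 := by simp [ind, h]

lemma ind_congr {P Q : Prop} (h : P ↔ Q) : ind P = ind Q := by simp only [h]

lemma ind_add_ind (P Q : Prop) : ind P + ind Q = ind (Xor P Q) := by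
  by_cases hP : P <;> by_cases hQ : Q <;>
    simp only [ind_pos, ind_neg, hP, hQ, Xor, not_true, not_false_eq_true, and_true, and_false,
      or_false, false_or] <;> decide

section Adjacency

variable {i : ℕ} {u v : Pt}

lemma cAdj_iff (hi : i = 1 ∨ i = 2) :
    cAdj i u v ↔ -1 ≤ u.1 - v.1 ∧ u.1 - v.1 ≤ 1 ∧ -1 ≤ u.2 - v.2 ∧ u.2 - v.2 ≤ 1 ∧
      (i = 1 → u.1 = v.1 ∨ u.2 = v.2) := by
  rcases hi with rfl | rfl <;>
    simp only [cAdj, if_true, if_false, true_implies, show (2 : ℕ) = 1 ↔ False by decide,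
      false_implies, and_true] <;>
    rcases abs_cases (u.1 - v.1) with ⟨h1, h1'⟩ | ⟨h1, h1'⟩ <;>
    rcases abs_cases (u.2 - v.2) with ⟨h2, h2'⟩ | ⟨h2, h2'⟩ <;> rw [h1, h2] <;> omega

lemma cAdj_comm : cAdj i u v ↔ cAdj i v u := by
  simp only [cAdj, abs_sub_comm u.1, abs_sub_comm u.2]

end Adjacency

section Components

def StepIn (i : ℕ) (A : Set Pt) (u v : Pt) : Prop := u ∈ A ∧ v ∈ A ∧ cAdj i u v

variable {i : ℕ} {A : Set Pt} {p x y z : Pt}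

instance : Std.Symm (StepIn i A) :=
  ⟨fun _ _ ⟨hu, hv, huv⟩ => ⟨hv, hu, cAdj_comm.1 huv⟩⟩

lemma chainIn_iff : ChainIn i A x y ↔ x ∈ A ∧ ReflTransGen (StepIn i A) x y := by
  constructor
  · rintro ⟨n, c, rfl, rfl, hmem, hadj⟩
    refine ⟨hmem 0 (Nat.zero_le n), ?_⟩
    suffices ∀ m ≤ n, ReflTransGen (StepIn i A) (c 0) (c m) from this n le_rfl
    intro m hm
    induction m with
    | zero => exact .refl
    | succ m ih =>
      exact (ih (by omega)).tail ⟨hmem m (by omega), hmem (m + 1) hm, hadj m hm⟩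
  · rintro ⟨hx, h⟩
    induction h with
    | refl => exact ⟨0, fun _ => x, rfl, rfl, fun _ _ => hx, fun _ h => absurd h (by omega)⟩
    | @tail y z _ hyz ih =>
      obtain ⟨n, c, hc0, hcn, hmem, hadj⟩ := ih
      refine ⟨n + 1, Function.update c (n + 1) z, ?_, by simp, fun m hm => ?_, fun m hm => ?_⟩
      · simpa [Function.update_apply] using hc0
      · rcases (by omega : m ≤ n ∨ m = n + 1) with hm | rfl
        · simpa [Function.update_apply, show m ≠ n + 1 by omega] using hmem m hm
        · simpa using hyz.2.1
      · rcases (by omega : m < n ∨ m = n) with hm | rfl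
        · simpa [Function.update_apply, show m ≠ n + 1 by omega, show m ≠ n by omega]
            using hadj m hm
        · simpa [Function.update_apply, hcn] using hyz.2.2

lemma ChainIn.trans (hxy : ChainIn i A x y) (hyz : ChainIn i A y z) : ChainIn i A x z := by
  rw [chainIn_iff] at *
  exact ⟨hxy.1, hxy.2.trans hyz.2⟩

lemma ChainIn.symm (h : ChainIn i A x y) : ChainIn i A y x := by
  obtain ⟨hx, h⟩ := chainIn_iff.1 h
  have hy : y ∈ A := by
    rcases h.cases_tail with rfl | ⟨_, _, hstep⟩
    exacts [hx, hstep.2.1]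
  exact chainIn_iff.2 ⟨hy, Std.Symm.symm _ _ h⟩

lemma compOf_subset : compOf i A p ⊆ A := fun _ hy =>
  (chainIn_iff.1 (ChainIn.symm hy)).1

lemma mem_compOf_self (hp : p ∈ A) : p ∈ compOf i A p := chainIn_iff.2 ⟨hp, .refl⟩

lemma compOf_eq_of_mem (hy : y ∈ compOf i A p) : compOf i A p = compOf i A y := by
  ext z
  exact ⟨hy.symm.trans, hy.trans⟩

lemma mem_compOf_of_cAdj (hy : y ∈ compOf i A p) (hz : z ∈ A) (hyz : cAdj i y z) :
    z ∈ compOf i A p := by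
  have hy' := compOf_subset hy
  exact ChainIn.trans hy (chainIn_iff.2 ⟨hy', .single ⟨hy', hz, hyz⟩⟩)

lemma conn_compOf : Conn i (compOf i A p) := by
  intro x hx y hy
  have key : ∀ y, ReflTransGen (StepIn i A) x y →
      y ∈ compOf i A p ∧ ReflTransGen (StepIn i (compOf i A p)) x y := by
    intro y h
    induction h with
    | refl => exact ⟨hx, .refl⟩
    | tail _ hyz ih =>
      have hz := mem_compOf_of_cAdj ih.1 hyz.2.1 hyz.2.2
      exact ⟨hz, ih.2.tail ⟨ih.1, hz, hyz.2.2⟩⟩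
  exact chainIn_iff.2 ⟨hx, (key y (chainIn_iff.1 (hx.symm.trans hy)).2).2⟩

end Components

section RowComponents

def IsRowCompAt (i : ℕ) (X : Set Pt) (y : ℤ) (r : Set Pt) : Prop :=
  ∃ p ∈ rowOf X y, r = compOf i (rowOf X y) p

variable {i : ℕ} {X r s : Set Pt} {y y' : ℤ} {a b u v w : Pt}

lemma isRowComp_iff : IsRowComp i X r ↔ ∃ y, IsRowCompAt i X y r := Iff.rfl

namespace IsRowCompAt

lemma subset_rowOf (hr : IsRowCompAt i X y r) : r ⊆ rowOf X y := by
  obtain ⟨p, -, rfl⟩ := hr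
  exact compOf_subset

lemma subset (hr : IsRowCompAt i X y r) : r ⊆ X := fun _ hw => (hr.subset_rowOf hw).1

lemma snd_eq (hr : IsRowCompAt i X y r) (hw : w ∈ r) : w.2 = y := (hr.subset_rowOf hw).2

lemma mk_fst_mem (hr : IsRowCompAt i X y r) (hw : w ∈ r) : (w.1, y) ∈ r := by
  rwa [← hr.snd_eq hw]

lemma nonempty (hr : IsRowCompAt i X y r) : r.Nonempty := by
  obtain ⟨p, hp, rfl⟩ := hr
  exact ⟨p, mem_compOf_self hp⟩

lemma eq_compOf (hr : IsRowCompAt i X y r) (hw : w ∈ r) : r = compOf i (rowOf X y) w := by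
  obtain ⟨p, -, rfl⟩ := hr
  exact compOf_eq_of_mem hw

lemma mem_of_cAdj (hr : IsRowCompAt i X y r) (hw : w ∈ r) (ha : a ∈ X) (hay : a.2 = y)
    (hwa : cAdj i w a) : a ∈ r := by
  obtain ⟨p, -, rfl⟩ := hr
  exact mem_compOf_of_cAdj hw ⟨ha, hay⟩ hwa

lemma eq_of_mem (hr : IsRowCompAt i X y r) (hs : IsRowCompAt i X y' s) (hwr : w ∈ r)
    (hws : w ∈ s) : r = s := by
  obtain rfl : y = y' := (hr.snd_eq hwr).symm.trans (hs.snd_eq hws)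
  rw [hr.eq_compOf hwr, hs.eq_compOf hws]

lemma conn (hr : IsRowCompAt i X y r) : Conn i r := by
  obtain ⟨p, -, rfl⟩ := hr
  exact conn_compOf

lemma mk_mem (hi : i = 1 ∨ i = 2) (hr : IsRowCompAt i X y r) (ha : a ∈ r) (hb : b ∈ r)
    {x : ℤ} (hax : a.1 ≤ x) (hxb : x ≤ b.1) : (x, y) ∈ r := by
  obtain ⟨-, hab⟩ := chainIn_iff.1 (hr.conn a ha b hb)
  suffices ∀ c, ReflTransGen (StepIn i r) a c →
      ∀ x, (a.1 ≤ x ∧ x ≤ c.1 ∨ c.1 ≤ x ∧ x ≤ a.1) → (x, y) ∈ r from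
    this b hab x (Or.inl ⟨hax, hxb⟩)
  intro c hac
  induction hac with
  | refl =>
    intro x hx
    obtain rfl : x = a.1 := by omega
    exact hr.mk_fst_mem ha
  | @tail c d _ hcd ih =>
    intro x hx
    obtain ⟨hc, hd, hcd⟩ := hcd
    have := (cAdj_iff hi).1 hcd
    by_cases hxc : a.1 ≤ x ∧ x ≤ c.1 ∨ c.1 ≤ x ∧ x ≤ a.1
    · exact ih x hxc
    · obtain rfl : x = d.1 := by omega
      exact hr.mk_fst_mem hd

lemma mk_mem_of_xor (hi : i = 1 ∨ i = 2) (hr : IsRowCompAt i X y r) (ha : a ∈ r)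
    (hb : b ∈ r) (hau : cAdj i a u) (hbv : cAdj i b v) {x : ℤ} (hux : u.1 ≠ x) (hvx : v.1 ≠ x)
    (huv : Xor (u.1 < x) (v.1 < x)) : (x, y) ∈ r := by
  have := (cAdj_iff hi).1 hau
  have := (cAdj_iff hi).1 hbv
  rcases huv with ⟨hu, hv⟩ | ⟨hv, hu⟩
  · exact hr.mk_mem hi ha hb (by omega) (by omega)
  · exact hr.mk_mem hi hb ha (by omega) (by omega)

lemma add_two_le_or_add_two_le (hi : i = 1 ∨ i = 2) (hr : IsRowCompAt i X y r)
    (hs : IsRowCompAt i X y s) (hrs : r ≠ s) (ha : a ∈ r) (hb : b ∈ s) :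
    a.1 + 2 ≤ b.1 ∨ b.1 + 2 ≤ a.1 := by
  by_contra! h
  have hay := hr.snd_eq ha
  have hby := hs.snd_eq hb
  refine hrs (hr.eq_of_mem hs (hr.mem_of_cAdj ha (hs.subset hb) hby ?_) hb)
  exact (cAdj_iff hi).2
    ⟨by omega, by omega, by omega, by omega, fun _ => Or.inr (hay.trans hby.symm)⟩

lemma lt_or_lt (hi : i = 1 ∨ i = 2) (hr : IsRowCompAt i X y r) (hs : IsRowCompAt i X y s)
    (hrs : r ≠ s) : (∀ a ∈ r, ∀ b ∈ s, a.1 < b.1) ∨ (∀ a ∈ r, ∀ b ∈ s, b.1 < a.1) := by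
  refine or_iff_not_imp_left.2 fun h => ?_
  obtain ⟨a, ha, b, hb, hba⟩ : ∃ a ∈ r, ∃ b ∈ s, b.1 ≤ a.1 := by simpa using h
  intro a' ha' b' hb'
  by_contra! hab'
  have := hr.add_two_le_or_add_two_le hi hs hrs ha hb
  have := hr.add_two_le_or_add_two_le hi hs hrs ha' hb'
  rcases le_or_gt a.1 b'.1 with hab | hab
  · have := hs.mk_mem hi hb hb' (by omega) hab
    rw [← hr.snd_eq ha] at this
    exact hrs (hr.eq_of_mem hs ha this)
  · have := hr.mk_mem hi ha' ha (by omega) hab.le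
    rw [← hs.snd_eq hb'] at this
    exact hrs (hr.eq_of_mem hs this hb')

lemma eq_add_one_or_eq_sub_one (hi : i = 1 ∨ i = 2) (hr : IsRowCompAt i X y r)
    (hs : IsRowCompAt i X y' s) (hrs : r ≠ s) (hadj : setAdj i r s) :
    y' = y + 1 ∨ y' = y - 1 := by
  obtain ⟨a, ha, b, hb, hab⟩ := hadj
  have hay := hr.snd_eq ha
  have hby := hs.snd_eq hb
  have := (cAdj_iff hi).1 hab
  rcases eq_or_ne y y' with rfl | hyy'
  · have := hr.add_two_le_or_add_two_le hi hs hrs ha hb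
    omega
  · omega

lemma exists_gap_of_lt (hi : i = 1 ∨ i = 2) (hX : X.Finite) (hr : IsRowCompAt i X y r)
    (hs : IsRowCompAt i X y s) (hrs : r ≠ s) (hlt : ∀ a ∈ r, ∀ b ∈ s, a.1 < b.1) :
    ∃ x₀, (x₀, y) ∉ X ∧ ∀ a ∈ r, ∀ b ∈ s, a.1 < x₀ ∧ x₀ < b.1 := by
  obtain ⟨m, hm, hmax⟩ := Set.exists_max_image r Prod.fst
    (hX.subset hr.subset) hr.nonempty
  have hmy := hr.snd_eq hm
  refine ⟨m.1 + 1, fun hgap => ?_, fun a ha b hb => ⟨by linarith [hmax a ha], ?_⟩⟩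
  · have := hmax _ (hr.mem_of_cAdj hm hgap rfl ((cAdj_iff hi).2 ⟨by simp, by simp,
      by simp [hmy], by simp [hmy], fun _ => Or.inr hmy⟩))
    simp at this
  · have := hr.add_two_le_or_add_two_le hi hs hrs hm hb
    have := hlt m hm b hb
    omega

lemma exists_gap (hi : i = 1 ∨ i = 2) (hX : X.Finite) (hr : IsRowCompAt i X y r)
    (hs : IsRowCompAt i X y s) (hrs : r ≠ s) :
    ∃ x₀, (x₀, y) ∉ X ∧ ∀ a ∈ r, ∀ b ∈ s, Xor (a.1 < x₀) (b.1 < x₀) := by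
  rcases hr.lt_or_lt hi hs hrs with hlt | hlt
  · obtain ⟨x₀, hgap, hx₀⟩ := hr.exists_gap_of_lt hi hX hs hrs hlt
    refine ⟨x₀, hgap, fun a ha b hb => ?_⟩
    have := hx₀ a ha b hb
    simp only [Xor]
    omega
  · obtain ⟨x₀, hgap, hx₀⟩ :=
      hs.exists_gap_of_lt hi hX hr hrs.symm fun b hb a ha => hlt a ha b hb
    refine ⟨x₀, hgap, fun a ha b hb => ?_⟩
    have := hx₀ b hb a ha
    simp only [Xor]
    omega

end IsRowCompAt

end RowComponents

/-- The step `u → v` crosses the vertical ray `{p.1 + ½} × [p.2, ∞)`. -/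
def CrossesRay (p u v : Pt) : Prop :=
  ((u.1 = p.1 ∧ v.1 = p.1 + 1) ∨ (u.1 = p.1 + 1 ∧ v.1 = p.1)) ∧ 2 * p.2 ≤ u.2 + v.2

/-- The lattice points of the region bounded by the rays from `p` and `q` and the segment `pq`. -/
def BetweenRays (p q w : Pt) : Prop :=
  (p.1 < w.1 ∧ w.1 ≤ q.1 ∨ q.1 < w.1 ∧ w.1 ≤ p.1) ∧ p.2 ≤ w.2 ∧ q.2 ≤ w.2

/-- A `c_i`-step in `X` cannot cross the `c_j`-step `pq` outside `X`, so it crosses the two rays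
as often, modulo `2`, as it enters or leaves the region between them. -/
lemma ind_crossesRay_add_ind_crossesRay {i j : ℕ} (hij : (i = 1 ∧ j = 2) ∨ (i = 2 ∧ j = 1))
    {X : Set Pt} {p q u v : Pt} (hp : p ∉ X) (hq : q ∉ X) (hpq : cAdj j p q)
    (hu : u ∈ X) (hv : v ∈ X) (huv : cAdj i u v) :
    ind (CrossesRay p u v) + ind (CrossesRay q u v) =
      ind (BetweenRays p q u) + ind (BetweenRays p q v) := by
  rw [ind_add_ind, ind_add_ind]
  refine ind_congr ?_
  have hup : ¬(u.1 = p.1 ∧ u.2 = p.2) := fun h => hp (Prod.ext h.1 h.2 ▸ hu)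
  have huq : ¬(u.1 = q.1 ∧ u.2 = q.2) := fun h => hq (Prod.ext h.1 h.2 ▸ hu)
  have hvp : ¬(v.1 = p.1 ∧ v.2 = p.2) := fun h => hp (Prod.ext h.1 h.2 ▸ hv)
  have hvq : ¬(v.1 = q.1 ∧ v.2 = q.2) := fun h => hq (Prod.ext h.1 h.2 ▸ hv)
  rw [cAdj_iff (by omega)] at hpq huv
  simp only [CrossesRay, BetweenRays, Xor]
  omega

section GapCount

/-- The crossings of the ray from `p`, corrected by the boundary of `{w ∈ T | w.1 ≤ p.1}`: this
does not change the sum along a closed path, but makes the summand vanish on every step except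
those joining `T` to the row of `p`. -/
noncomputable def gapCount (T : Set Pt) (p u v : Pt) : ZMod 2 :=
  ind (CrossesRay p u v) + (ind (u ∈ T ∧ u.1 ≤ p.1) + ind (v ∈ T ∧ v.1 ≤ p.1))

variable {i : ℕ} {X T : Set Pt} {p u v : Pt}

lemma gapCount_comm : gapCount T p u v = gapCount T p v u := by
  simp only [gapCount, CrossesRay, add_comm (ind (u ∈ T ∧ _))]
  congr 2
  apply propext
  omega

lemma gapCount_of_mem_of_mem (hi : i = 1 ∨ i = 2) (hT : IsRowCompAt i X (p.2 + 1) T)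
    (hu : u ∈ T) (hv : v ∈ T) (huv : cAdj i u v) : gapCount T p u v = 0 := by
  have := hT.snd_eq hu
  have := hT.snd_eq hv
  rw [cAdj_iff hi] at huv
  rw [gapCount, ind_add_ind, CharTwo.add_eq_zero]
  refine ind_congr ?_
  simp only [CrossesRay, Xor, hu, hv, true_and]
  omega

lemma gapCount_of_not_mem (hi : i = 1 ∨ i = 2) (hT : IsRowCompAt i X (p.2 + 1) T)
    (hpT : (p.1, p.2 + 1) ∈ T) (hp : p ∉ X) (hu : u ∈ X) (hv : v ∈ X) (huT : u ∉ T)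
    (hvT : v ∉ T) (hu2 : u.2 ≤ p.2 + 1) (hv2 : v.2 ≤ p.2 + 1) : gapCount T p u v = 0 := by
  have away : ∀ w ∈ X, w ∉ T → ¬(w.2 = p.2 + 1 ∧ (w.1 = p.1 ∨ w.1 = p.1 + 1)) ∧
      ¬(w.2 = p.2 ∧ w.1 = p.1) := by
    refine fun w hw hwT => ⟨fun h => hwT (hT.mem_of_cAdj hpT hw h.1 ?_), fun h => ?_⟩
    · exact (cAdj_iff hi).2 ⟨by omega, by omega, by omega, by omega, fun _ => Or.inr h.1.symm⟩
    · exact hp (Prod.ext h.2 h.1 ▸ hw)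
  have := away u hu huT
  have := away v hv hvT
  have hcross : ¬CrossesRay p u v := by
    simp only [CrossesRay]
    omega
  rw [gapCount, ind_neg hcross, ind_neg fun h : u ∈ T ∧ _ => huT h.1,
    ind_neg fun h : v ∈ T ∧ _ => hvT h.1, add_zero, add_zero]

lemma gapCount_of_mem_of_snd_eq (hi : i = 1 ∨ i = 2) (hT : IsRowCompAt i X (p.2 + 1) T)
    (hp : p ∉ X) (hu : u ∈ T) (hv : v ∈ X) (hv2 : v.2 = p.2) (huv : cAdj i u v) :
    gapCount T p u v = ind (v.1 < p.1) := by
  have := hT.snd_eq hu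
  have hvp : v.1 ≠ p.1 := fun h => hp (Prod.ext h hv2 ▸ hv)
  rw [cAdj_iff hi] at huv
  rw [gapCount, ind_neg fun h : v ∈ T ∧ _ => by have := hT.snd_eq h.1; omega, add_zero,
    ind_add_ind]
  refine ind_congr ?_
  simp only [CrossesRay, Xor, hu, true_and]
  omega

end GapCount

/-- A closed path in `ℤ²` cut into `k` pieces: piece `n` runs through `pt n 0, …, pt n (len n)`
and is followed by a jump to `pt (n + 1) 0`. -/
structure PieceLoop (k : ℕ) where
  len : Fin k → ℕ
  pt : Fin k → ℕ → Pt

namespace PieceLoop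

variable {k : ℕ} [NeZero k] (L : PieceLoop k)

def IsStep (u v : Pt) : Prop :=
  (∃ n, ∃ t < L.len n, u = L.pt n t ∧ v = L.pt n (t + 1)) ∨
    ∃ n, u = L.pt n (L.len n) ∧ v = L.pt (n + 1) 0

def IsPathIn (i : ℕ) (X : Set Pt) : Prop := ∀ u v, L.IsStep u v → u ∈ X ∧ v ∈ X ∧ cAdj i u v

structure Follows (i : ℕ) (e : Fin k → Set Pt) : Prop where
  mem : ∀ n, ∀ t ≤ L.len n, L.pt n t ∈ e n
  cAdj_piece : ∀ n, ∀ t < L.len n, cAdj i (L.pt n t) (L.pt n (t + 1))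
  cAdj_jump : ∀ n, cAdj i (L.pt n (L.len n)) (L.pt (n + 1) 0)

noncomputable def stepSum (f : Pt → Pt → ZMod 2) : ZMod 2 :=
  ∑ n, ((∑ t ∈ range (L.len n), f (L.pt n t) (L.pt n (t + 1))) +
    f (L.pt n (L.len n)) (L.pt (n + 1) 0))

noncomputable def crossParity (p : Pt) : ZMod 2 := L.stepSum fun u v => ind (CrossesRay p u v)

lemma stepSum_add (f g : Pt → Pt → ZMod 2) :
    L.stepSum (fun u v => f u v + g u v) = L.stepSum f + L.stepSum g := by
  simp only [stepSum, Finset.sum_add_distrib]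
  abel

lemma stepSum_boundary (P : Pt → Prop) :
    L.stepSum (fun u v => ind (P u) + ind (P v)) = 0 := by
  set g : Fin k → ZMod 2 := fun n => ind (P (L.pt n 0))
  have piece : ∀ n, (∑ t ∈ range (L.len n), (ind (P (L.pt n t)) + ind (P (L.pt n (t + 1))))) +
      (ind (P (L.pt n (L.len n))) + ind (P (L.pt (n + 1) 0))) = g n + g (n + 1) := by
    intro n
    set a : ℕ → ZMod 2 := fun t => ind (P (L.pt n t))
    have htel : ∑ t ∈ range (L.len n), (a t + a (t + 1)) = a (L.len n) - a 0 := by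
      rw [← Finset.sum_range_sub]
      exact Finset.sum_congr rfl fun t _ => by rw [CharTwo.sub_eq_add, add_comm]
    rw [htel]
    linear_combination CharTwo.add_self_eq_zero (a (L.len n)) - CharTwo.add_self_eq_zero (a 0)
  have hshift : ∑ n, g (n + 1) = ∑ n, g n :=
    Fintype.sum_equiv (Equiv.addRight 1) _ _ fun _ => rfl
  unfold stepSum
  rw [Finset.sum_congr rfl fun n _ => piece n, Finset.sum_add_distrib, hshift]
  exact CharTwo.add_self_eq_zero _

lemma stepSum_gapCount (T : Set Pt) (p : Pt) : L.stepSum (gapCount T p) = L.crossParity p := by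
  have := L.stepSum_add (fun u v => ind (CrossesRay p u v))
    fun u v => ind (u ∈ T ∧ u.1 ≤ p.1) + ind (v ∈ T ∧ v.1 ≤ p.1)
  rwa [stepSum_boundary, add_zero] at this

lemma stepSum_eq_sum_jumps {f : Pt → Pt → ZMod 2}
    (h : ∀ n, ∀ t < L.len n, f (L.pt n t) (L.pt n (t + 1)) = 0) :
    L.stepSum f = ∑ n, f (L.pt n (L.len n)) (L.pt (n + 1) 0) := by
  refine Finset.sum_congr rfl fun n _ => ?_
  rw [Finset.sum_eq_zero fun t ht => h n t (Finset.mem_range.1 ht), zero_add]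

variable {L} {i j : ℕ} {X : Set Pt} {e : Fin k → Set Pt} {p q : Pt}

lemma stepSum_congr {f g : Pt → Pt → ZMod 2} (h : ∀ u v, L.IsStep u v → f u v = g u v) :
    L.stepSum f = L.stepSum g := by
  refine Finset.sum_congr rfl fun n _ => ?_
  congr 1
  · exact Finset.sum_congr rfl fun t ht =>
      h _ _ (Or.inl ⟨n, t, Finset.mem_range.1 ht, rfl, rfl⟩)
  · exact h _ _ (Or.inr ⟨n, rfl, rfl⟩)

lemma crossParity_eq_of_cAdj (hij : (i = 1 ∧ j = 2) ∨ (i = 2 ∧ j = 1)) (hL : L.IsPathIn i X)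
    (hp : p ∉ X) (hq : q ∉ X) (hpq : cAdj j p q) : L.crossParity p = L.crossParity q := by
  have h := stepSum_congr (L := L)
    (f := fun u v => ind (CrossesRay p u v) + ind (CrossesRay q u v))
    (g := fun u v => ind (BetweenRays p q u) + ind (BetweenRays p q v)) fun u v huv => by
      obtain ⟨hu, hv, huv⟩ := hL u v huv
      exact ind_crossesRay_add_ind_crossesRay hij hp hq hpq hu hv huv
  rw [stepSum_add, stepSum_boundary] at h
  exact CharTwo.add_eq_zero.1 h

lemma crossParity_eq_of_chainIn (hij : (i = 1 ∧ j = 2) ∨ (i = 2 ∧ j = 1)) (hL : L.IsPathIn i X)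
    (h : ChainIn j Xᶜ p q) : L.crossParity p = L.crossParity q := by
  rw [chainIn_iff] at h
  obtain ⟨-, h⟩ := h
  induction h with
  | refl => rfl
  | tail _ hst ih => exact ih.trans (crossParity_eq_of_cAdj hij hL hst.1 hst.2.1 hst.2.2)

lemma crossParity_eq_zero (hi : i = 1 ∨ i = 2) (hL : L.IsPathIn i X) {lo up : Pt}
    (hX : X ⊆ Set.Icc lo up) (hq : q ∉ Set.Icc lo up) : L.crossParity q = 0 := by
  -- Below the box the ray meets the path exactly where the path changes sides of the line
  -- `x = q.1 + ½`; to the left, right or above the box it never meets the path.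
  rw [← L.stepSum_boundary fun w => q.2 < lo.2 ∧ w.1 ≤ q.1]
  refine stepSum_congr fun u v huv => ?_
  obtain ⟨hu, hv, huv⟩ := hL u v huv
  have hu := hX hu
  have hv := hX hv
  rw [ind_add_ind]
  refine ind_congr ?_
  simp only [Set.mem_Icc, Prod.le_def, not_and_or, not_le] at hu hv hq
  rw [cAdj_iff hi] at huv
  simp only [CrossesRay, Xor]
  omega

lemma crossParity_eq_zero_of_infinite (hij : (i = 1 ∧ j = 2) ∨ (i = 2 ∧ j = 1))
    (hL : L.IsPathIn i X) (hX : X.Finite) (hp : (compOf j Xᶜ p).Infinite) :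
    L.crossParity p = 0 := by
  obtain ⟨lo, hlo⟩ := hX.bddBelow
  obtain ⟨up, hup⟩ := hX.bddAbove
  obtain ⟨q, hq, hqbox⟩ := Set.not_subset.1 fun h => hp ((Set.finite_Icc lo up).subset h)
  rw [crossParity_eq_of_chainIn hij hL hq]
  exact crossParity_eq_zero (by omega) hL (fun w hw => ⟨hlo hw, hup hw⟩) hqbox

lemma Follows.isPathIn (hL : L.Follows i e) (he : ∀ n, e n ⊆ X) : L.IsPathIn i X := by
  rintro u v (⟨n, t, ht, rfl, rfl⟩ | ⟨n, rfl, rfl⟩)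
  · exact ⟨he n (hL.mem n t ht.le), he n (hL.mem n (t + 1) ht), hL.cAdj_piece n t ht⟩
  · exact ⟨he n (hL.mem n _ le_rfl), he (n + 1) (hL.mem (n + 1) 0 (Nat.zero_le _)),
      hL.cAdj_jump n⟩

lemma exists_follows (hconn : ∀ n, Conn i (e n)) (hadj : ∀ n, setAdj i (e n) (e (n + 1))) :
    ∃ L : PieceLoop k, L.Follows i e := by
  choose a ha b hb hab using hadj
  have hb' : ∀ n, b (n - 1) ∈ e n := fun n => by simpa using hb (n - 1)
  choose len c hc0 hclen hmem hstep using fun n => hconn n _ (hb' n) _ (ha n)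
  refine ⟨⟨len, c⟩, ⟨hmem, hstep, fun n => ?_⟩⟩
  simpa [hclen, hc0] using hab n

/-- Only the jumps into and out of `e t` contribute to the sum of `gapCount`, and exactly one
of them comes from the left of `p`. -/
lemma Follows.crossParity_eq_one (hi : i = 1 ∨ i = 2) (hL : L.Follows i e)
    (he : Function.Injective e) {y : Fin k → ℤ} (hy : ∀ n, IsRowCompAt i X (y n) (e n))
    {t : Fin k} (htop : ∀ n, y n ≤ y t) (ht : t - 1 ≠ t) (hp : p ∉ X) (hyt : y t = p.2 + 1)
    (hprev : y (t - 1) = p.2) (hnext : y (t + 1) = p.2)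
    (hsep : ∀ a ∈ e (t - 1), ∀ b ∈ e (t + 1), Xor (a.1 < p.1) (b.1 < p.1)) :
    L.crossParity p = 1 := by
  have hT : IsRowCompAt i X (p.2 + 1) (e t) := hyt ▸ hy t
  have hjump : ∀ n, L.pt n (L.len n) ∈ e n ∧ L.pt (n + 1) 0 ∈ e (n + 1) :=
    fun n => ⟨hL.mem n _ le_rfl, hL.mem _ 0 (Nat.zero_le _)⟩
  have hin := hL.cAdj_jump (t - 1)
  obtain ⟨ha, hin₂⟩ := hjump (t - 1)
  obtain ⟨hout₁, hb⟩ := hjump t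
  rw [sub_add_cancel] at hin hin₂
  have ha2 := hprev ▸ (hy _).snd_eq ha
  have hb2 := hnext ▸ (hy _).snd_eq hb
  have hpT : (p.1, p.2 + 1) ∈ e t :=
    hT.mk_mem_of_xor hi hin₂ hout₁ (cAdj_comm.1 hin) (hL.cAdj_jump t)
      (fun h => hp (Prod.ext h ha2 ▸ (hy _).subset ha))
      (fun h => hp (Prod.ext h hb2 ▸ (hy _).subset hb))
      (hsep _ ha _ hb)
  have hoff : ∀ n ≠ t, ∀ w ∈ e n, w ∈ X ∧ w ∉ e t ∧ w.2 ≤ p.2 + 1 := fun n hn w hw =>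
    ⟨(hy n).subset hw, fun hwt => hn (he ((hy n).eq_of_mem (hy t) hw hwt)),
      (hy n).snd_eq hw ▸ hyt ▸ htop n⟩
  calc L.crossParity p = L.stepSum (gapCount (e t) p) := (L.stepSum_gapCount _ _).symm
    _ = ∑ n, gapCount (e t) p (L.pt n (L.len n)) (L.pt (n + 1) 0) := by
      refine L.stepSum_eq_sum_jumps fun n s hs => ?_
      have hu := hL.mem n s hs.le
      have hv := hL.mem n (s + 1) hs
      rcases eq_or_ne n t with rfl | hn
      · exact gapCount_of_mem_of_mem hi hT hu hv (hL.cAdj_piece n s hs)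
      · obtain ⟨huX, huT, hu2⟩ := hoff n hn _ hu
        obtain ⟨hvX, hvT, hv2⟩ := hoff n hn _ hv
        exact gapCount_of_not_mem hi hT hpT hp huX hvX huT hvT hu2 hv2
    _ = gapCount (e t) p (L.pt t (L.len t)) (L.pt (t + 1) 0) +
        gapCount (e t) p (L.pt (t - 1) (L.len (t - 1))) (L.pt t 0) := by
      rw [Fintype.sum_eq_add t (t - 1) ht.symm, sub_add_cancel]
      rintro n ⟨hnt, hnt'⟩
      obtain ⟨huX, huT, hu2⟩ := hoff n hnt _ (hjump n).1
      have hnt'' : n + 1 ≠ t := fun h => hnt' (eq_sub_of_add_eq h)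
      obtain ⟨hvX, hvT, hv2⟩ := hoff (n + 1) hnt'' _ (hjump n).2
      exact gapCount_of_not_mem hi hT hpT hp huX hvX huT hvT hu2 hv2
    _ = ind ((L.pt (t + 1) 0).1 < p.1) + ind ((L.pt (t - 1) (L.len (t - 1))).1 < p.1) := by
      rw [gapCount_of_mem_of_snd_eq hi hT hp hout₁ ((hy _).subset hb) hb2 (hL.cAdj_jump t),
        gapCount_comm, gapCount_of_mem_of_snd_eq hi hT hp hin₂ ((hy _).subset ha) ha2
        (cAdj_comm.1 hin)]
    _ = 1 := by rw [ind_add_ind, ind_pos (xor_comm _ _ ▸ hsep _ ha _ hb)]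

end PieceLoop

theorem not_injective_of_rcgAdj {i j : ℕ} (hij : (i = 1 ∧ j = 2) ∨ (i = 2 ∧ j = 1))
    {X : Set Pt} (hX : X.Finite) (hnohole : NoHole j X) {k : ℕ} [NeZero k] (hk : 3 ≤ k)
    {e : Fin k → Set Pt} (hadj : ∀ n, rcgAdj i X (e n) (e (n + 1))) : ¬Function.Injective e := by
  intro he
  have hi : i = 1 ∨ i = 2 := by omega
  choose y hy using fun n => isRowComp_iff.1 (hadj n).1
  obtain ⟨t, htop⟩ := Finite.exists_max y
  have hstep n : y (n + 1) = y n + 1 ∨ y (n + 1) = y n - 1 :=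
    (hy n).eq_add_one_or_eq_sub_one hi (hy (n + 1)) (hadj n).2.2.1 (hadj n).2.2.2
  have hnext : y (t + 1) = y t - 1 := by
    have := hstep t
    have := htop (t + 1)
    omega
  have hprev : y (t - 1) = y t - 1 := by
    have := hstep (t - 1)
    have := htop (t - 1)
    rw [sub_add_cancel] at *
    omega
  have h1 : (1 : Fin k) ≠ 0 := by simp [Fin.ext_iff, Nat.mod_eq_of_lt (by omega : 1 < k)]
  have h2 : (1 : Fin k) + 1 ≠ 0 := by
    simp [Fin.ext_iff, Fin.val_add, Nat.mod_eq_of_lt (by omega : 1 < k),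
      Nat.mod_eq_of_lt (by omega : 2 < k)]
  have hne : e (t - 1) ≠ e (t + 1) := fun h => h2 (by
    rw [show (1 : Fin k) + 1 = t + 1 - (t - 1) by abel, he h, sub_self])
  obtain ⟨x₀, hgap, hsep⟩ := (hprev ▸ hy (t - 1)).exists_gap hi hX (hnext ▸ hy (t + 1)) hne
  obtain ⟨L, hL⟩ := PieceLoop.exists_follows (fun n => (hy n).conn) fun n => (hadj n).2.2.2
  have hone := hL.crossParity_eq_one (p := (x₀, y t - 1)) hi he hy htop (by simpa using h1) hgap
    (by simp) hprev hnext hsep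
  have hzero := PieceLoop.crossParity_eq_zero_of_infinite hij
    (hL.isPathIn fun n => (hy n).subset) hX (hnohole _ hgap)
  exact one_ne_zero (hone.symm.trans hzero)

/-- if the digital picture `(X,c_i,c_j)` has no hole, then the row
component graph `R(X,c_i)` is acyclic. -/
theorem stmt7 (i j : ℕ) (hij : (i = 1 ∧ j = 2) ∨ (i = 2 ∧ j = 1))
    (X : Set Pt) (hX : X.Finite) (hnohole : NoHole j X) :
    RCGAcyclic i X := by
  rintro ⟨k, r, hk, -, hinj, hpath, hwrap⟩
  have : NeZero k := ⟨by omega⟩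
  refine not_injective_of_rcgAdj hij hX hnohole hk (e := fun n : Fin k => r n) (fun n => ?_)
    fun a b hab => Fin.ext (hinj a a.2 b b.2 hab)
  have hval : ((n + 1 : Fin k) : ℕ) = (n + 1) % k := by
    simp [Fin.val_add, Nat.mod_eq_of_lt (by omega : 1 < k)]
  by_cases hn : (n : ℕ) + 1 < k
  · simpa [hval, Nat.mod_eq_of_lt hn] using hpath n hn
  · have hn : (n : ℕ) = k - 1 := by omega
    simpa [hval, hn, show k - 1 + 1 = k by omega] using hwrap
end

section
/- Let X ⊆ ℤ² be a digital image with c_i-adjacency, i ∈ {1,2}, and let r be a finite row component of X that is c_i-adjacent to exactly one other row component of X. Then (X,c_i) is i-homotopy equivalent to (X ∖ r, c_i). -/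
section Aux

variable {i : ℕ}

lemma cadj_refl (p : Pt) : cAdj i p p := by
  unfold cAdj; split_ifs <;> simp

lemma cadj_symm {p q : Pt} (h : cAdj i p q) : cAdj i q p := by
  unfold cAdj at h ⊢
  rw [abs_sub_comm q.1 p.1, abs_sub_comm q.2 p.2]; exact h

lemma cadj_snd {p q : Pt} (h : cAdj i p q) : |p.2 - q.2| ≤ 1 := by
  unfold cAdj at h; split_ifs at h
  · have := abs_nonneg (p.1 - q.1); linarith
  · exact h.2

lemma cadj_horiz (hi : i = 1 ∨ i = 2) (u v m : ℤ) :
    cAdj i (u, m) (v, m) ↔ |u - v| ≤ 1 := by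
  rcases hi with h | h <;> subst h <;> simp [cAdj]

lemma cadj_vert (hi : i = 1 ∨ i = 2) {m m' : ℤ} (hm : |m - m'| = 1) (u v : ℤ) :
    cAdj i (u, m) (v, m') ↔ |u - v| ≤ (if i = 1 then (0:ℤ) else 1) := by
  rcases hi with h | h <;> subst h
  · simp only [cAdj, if_pos rfl, reduceIte]
    constructor
    · intro hh; simp only [hm] at hh; linarith
    · intro hh; simp only [hm]; linarith
  · simp only [cAdj, if_neg (by norm_num : (2:ℕ) ≠ 1)]
    constructor
    · exact fun hh => hh.1
    · exact fun hh => ⟨hh, le_of_eq hm⟩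

lemma pt_eta (p : Pt) (m : ℤ) (h : p.2 = m) : p = (p.1, m) := by rw [← h]

lemma chainin_refl {A : Set Pt} {x : Pt} (hx : x ∈ A) : ChainIn i A x x :=
  ⟨0, fun _ => x, rfl, rfl, fun _ _ => hx, fun k hk => absurd hk (Nat.not_lt_zero k)⟩

lemma chainin_symm {A : Set Pt} {x y : Pt} (h : ChainIn i A x y) : ChainIn i A y x := by
  obtain ⟨n, c, h0, hn, hA, hadj⟩ := h
  refine ⟨n, fun j => c (n - j), by simp [hn], by simp [h0], fun j hj => hA _ (by omega), ?_⟩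
  intro j hj
  show cAdj i (c (n - j)) (c (n - (j + 1)))
  have e : n - j = (n - (j + 1)) + 1 := by omega
  rw [e]
  exact cadj_symm (hadj (n - (j+1)) (by omega))

lemma chainin_trans {A : Set Pt} {x y z : Pt} (h1 : ChainIn i A x y)
    (h2 : ChainIn i A y z) : ChainIn i A x z := by
  obtain ⟨n, c, hc0, hcn, hcA, hcadj⟩ := h1
  obtain ⟨m, d, hd0, hdm, hdA, hdadj⟩ := h2
  refine ⟨n + m, fun j => if j ≤ n then c j else d (j - n), by simp [hc0], ?_, ?_, ?_⟩
  · by_cases hm : m = 0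
    · subst hm; simp only [Nat.add_zero, if_pos (le_refl n), hcn]
      rw [← hd0, hdm]
    · simp only [if_neg (by omega : ¬ n + m ≤ n)]
      have : n + m - n = m := by omega
      rw [this, hdm]
  · intro j hj
    by_cases h : j ≤ n
    · simpa [h] using hcA j h
    · simpa [h] using hdA (j - n) (by omega)
  · intro j hj
    by_cases h1' : j + 1 ≤ n
    · simp only [if_pos (by omega : j ≤ n), if_pos h1']
      exact hcadj j (by omega)
    · by_cases h2' : j ≤ n
      · have hjn : j = n := by omega
        simp only [if_pos h2', if_neg h1']
        have e : j + 1 - n = 1 := by omega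
        have e2 : c j = d 0 := by rw [hjn, hcn, ← hd0]
        rw [e, e2]
        exact hdadj 0 (by omega)
      · simp only [if_neg h2', if_neg h1']
        have e : j + 1 - n = (j - n) + 1 := by omega
        rw [e]
        exact hdadj (j - n) (by omega)

lemma chainin_snoc {A : Set Pt} {x y z : Pt} (h : ChainIn i A x y) (hz : z ∈ A)
    (ha : cAdj i y z) : ChainIn i A x z := by
  refine chainin_trans h ⟨1, fun j => if j = 0 then y else z, by simp, by simp, ?_, ?_⟩
  · intro j hj
    by_cases h0 : j = 0
    · simp only [if_pos h0]
      obtain ⟨n, c, _, hcn, hcA, _⟩ := h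
      rw [← hcn]; exact hcA n le_rfl
    · simp only [if_neg h0]; exact hz
  · intro j hj
    have h0 : j = 0 := by omega
    subst h0
    simpa using ha

lemma compOf_eq_of_mem_s8 {A : Set Pt} {p q : Pt} (h : q ∈ compOf i A p) :
    compOf i A p = compOf i A q := by
  ext y
  exact ⟨fun hy => chainin_trans (chainin_symm h) hy, fun hy => chainin_trans h hy⟩

lemma ivt : ∀ (n : ℕ) (c : ℕ → ℤ), (∀ j, j < n → |c (j+1) - c j| ≤ 1) → ∀ y : ℤ,
    ((c 0 ≤ y ∧ y ≤ c n) ∨ (c n ≤ y ∧ y ≤ c 0)) → ∃ j, j ≤ n ∧ c j = y := by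
  intro n
  induction n with
  | zero => intro c _ y hy; exact ⟨0, le_refl _, by omega⟩
  | succ n ih =>
    intro c hc y hy
    by_cases hy' : (c 0 ≤ y ∧ y ≤ c n) ∨ (c n ≤ y ∧ y ≤ c 0)
    · obtain ⟨j, hj, e⟩ := ih c (fun j hj => hc j (by omega)) y hy'
      exact ⟨j, by omega, e⟩
    · have h1 := abs_sub_le_iff.mp (hc n (by omega))
      exact ⟨n + 1, le_refl _, by omega⟩

/-- clamp `x` into `[l,h]`. -/
def clampI (l h x : ℤ) : ℤ := if x < l then l else if h < x then h else x

lemma clampI_diff {l h l' h' x x' e : ℤ} (hl : l ≤ h) (hl' : l' ≤ h')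
    (hx : |x - x'| ≤ e) (h1 : |l - l'| ≤ e) (h2 : |h - h'| ≤ e) :
    |clampI l h x - clampI l' h' x'| ≤ e := by
  rw [abs_sub_le_iff] at hx h1 h2 ⊢
  unfold clampI
  split_ifs <;> omega

lemma clampI_eq_self {l h x : ℤ} (h1 : l ≤ x) (h2 : x ≤ h) : clampI l h x = x := by
  unfold clampI; split_ifs <;> omega

lemma clampI_mem {l h x a b : ℤ} (h1 : l ≤ b) (h2 : a ≤ h) (hx : a ≤ x) (hxb : x ≤ b) :
    a ≤ clampI l h x ∧ clampI l h x ≤ b := by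
  unfold clampI; split_ifs <;> omega

lemma clampI_range {l h x : ℤ} (hlh : l ≤ h) : l ≤ clampI l h x ∧ clampI l h x ≤ h := by
  unfold clampI; split_ifs <;> omega

open Classical in
/-- snap `x` to a nearby element of `B`. -/
noncomputable def sig (B : Set ℤ) (x : ℤ) : ℤ :=
  if x ∈ B then x else if x + 1 ∈ B then x + 1 else x - 1

section Sig
variable {B : Set ℤ}

lemma sig_cases {x : ℤ} (hx : x - 1 ∈ B ∨ x ∈ B ∨ x + 1 ∈ B) :
    (sig B x = x ∧ x ∈ B) ∨ (sig B x = x + 1 ∧ x ∉ B ∧ x + 1 ∈ B) ∨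
    (sig B x = x - 1 ∧ x ∉ B ∧ x + 1 ∉ B ∧ x - 1 ∈ B) := by
  unfold sig; split_ifs with h1 h2 <;> tauto

variable (hB : ∀ u v w : ℤ, u ∈ B → w ∈ B → u ≤ v → v ≤ w → v ∈ B)

include hB

omit hB in
lemma sig_mem {x : ℤ} (hx : x - 1 ∈ B ∨ x ∈ B ∨ x + 1 ∈ B) : sig B x ∈ B := by
  rcases sig_cases hx with ⟨e, h⟩ | ⟨e, _, h⟩ | ⟨e, _, _, h⟩ <;> rw [e] <;> exact h

lemma sig_near {x y : ℤ} (hx : x - 1 ∈ B ∨ x ∈ B ∨ x + 1 ∈ B) (hy : y ∈ B)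
    (h : |x - y| ≤ 1) : |sig B x - y| ≤ 1 := by
  rw [abs_sub_le_iff] at h ⊢
  rcases sig_cases hx with ⟨e, h1⟩ | ⟨e, h1, h2⟩ | ⟨e, h1, h2, h3⟩ <;> rw [e]
  · exact h
  · have : y ≠ x - 1 := fun hne => h1 (hB y x (x+1) (hne ▸ hy) h2 (by omega) (by omega))
    omega
  · have : y ≠ x + 1 := fun hne => h1 (hB (x-1) x (x+1) h3 (hne ▸ hy) (by omega) (by omega))
    have : y ≠ x := fun hne => h1 (hne ▸ hy)
    omega

lemma sig_near2 {x x' : ℤ} (hx : x - 1 ∈ B ∨ x ∈ B ∨ x + 1 ∈ B)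
    (hx' : x' - 1 ∈ B ∨ x' ∈ B ∨ x' + 1 ∈ B) (h : |x - x'| ≤ 1) :
    |sig B x - x'| ≤ 1 := by
  rw [abs_sub_le_iff] at h ⊢
  rcases sig_cases hx with ⟨e, h1⟩ | ⟨e, h1, h2⟩ | ⟨e, h1, h2, h3⟩ <;> rw [e]
  · omega
  · have : x' ≠ x - 1 := by
      intro hne; subst hne
      rcases hx' with hb | hb | hb
      · exact h1 (hB (x - 1 - 1) x (x+1) hb h2 (by omega) (by omega))
      · exact h1 (hB (x - 1) x (x+1) hb h2 (by omega) (by omega))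
      · simp only [sub_add_cancel] at hb; exact h1 hb
    omega
  · have : x' ≠ x + 1 := by
      intro hne; subst hne
      rcases hx' with hb | hb | hb
      · simp only [add_sub_cancel_right] at hb; exact h1 hb
      · exact h2 hb
      · exact h1 (hB (x-1) x (x+1+1) h3 hb (by omega) (by omega))
    omega

lemma sig_cont {x x' : ℤ} (hx : x - 1 ∈ B ∨ x ∈ B ∨ x + 1 ∈ B)
    (hx' : x' - 1 ∈ B ∨ x' ∈ B ∨ x' + 1 ∈ B) (h : |x - x'| ≤ 1) :
    |sig B x - sig B x'| ≤ 1 := by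
  rw [abs_sub_le_iff] at h ⊢
  rcases sig_cases hx with ⟨e, h1⟩ | ⟨e, h1, h2⟩ | ⟨e, h1, h2, h3⟩ <;>
    rcases sig_cases hx' with ⟨e', h1'⟩ | ⟨e', h1', h2'⟩ | ⟨e', h1', h2', h3'⟩ <;>
    rw [e, e']
  · omega
  · have hne : x' ≠ x + 1 := by
      intro hne; subst hne
      exact h1' (hB x (x+1) (x+1+1) h1 h2' (by omega) (by omega))
    omega
  · have hne : x' ≠ x - 1 := by
      intro hne; subst hne
      exact h1' (hB (x-1-1) (x-1) x h3' h1 (by omega) (by omega))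
    omega
  · have hne : x' ≠ x - 1 := by
      intro hne; subst hne
      exact h1 (hB (x-1) x (x+1) h1' h2 (by omega) (by omega))
    omega
  · omega
  · have hne1 : x' ≠ x := by
      intro hne
      exact h1 (hB (x'-1) x (x+1) h3' h2 (by omega) (by omega))
    have hne2 : x' ≠ x - 1 := by
      intro hne
      exact h1 (hB (x'-1) x (x+1) h3' h2 (by omega) (by omega))
    omega
  · have hne : x' ≠ x + 1 := by
      intro hne; subst hne
      exact h2 h1'
    omega
  · have hne1 : x' ≠ x := by
      intro hne; subst hne
      exact h2 h2'
    have hne2 : x' ≠ x + 1 := by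
      intro hne; subst hne
      exact h1 (hB (x-1) x (x+1+1) h3 h2' (by omega) (by omega))
    omega
  · omega

omit hB in
lemma sig_id {x : ℤ} (h : x ∈ B) : sig B x = x := by simp [sig, h]

end Sig
end Aux

/-- if `r` is a finite row component of `X` which is `c_i`-adjacent to
exactly one other row component, then `(X,c_i)` is `i`-homotopy equivalent to
`(X ∖ r, c_i)`. -/
theorem stmt8 (i : ℕ) (hi : i = 1 ∨ i = 2) (X r : Set Pt)
    (hr : IsRowComp i X r) (hrfin : r.Finite)
    (huniq : ∃! s : Set Pt, IsRowComp i X s ∧ s ≠ r ∧ setAdj i r s) :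
    HtpyEquiv i (subAdj i X) (subAdj i (X \ r)) := by
  classical
  obtain ⟨k, p₀, hp₀, hrdef⟩ := hr
  obtain ⟨s, ⟨hsrc, hsne, hsadj⟩, huq⟩ := huniq
  obtain ⟨k', q₀, hq₀, hsdef⟩ := hsrc
  have hhoriz := cadj_horiz hi
  -- general facts about components of rows
  have comp_row : ∀ (m : ℤ) (z q : Pt), q ∈ compOf i (rowOf X m) z → q.2 = m ∧ q ∈ X := by
    intro m z q hq
    obtain ⟨n, c, _, hcn, hcA, _⟩ := hq
    have h2 := hcA n le_rfl
    rw [hcn] at h2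
    exact ⟨h2.2, h2.1⟩
  have comp_int : ∀ (m : ℤ) (z : Pt), ∀ x y w : ℤ, x ≤ y → y ≤ w →
      (x, m) ∈ compOf i (rowOf X m) z → (w, m) ∈ compOf i (rowOf X m) z →
      (y, m) ∈ compOf i (rowOf X m) z := by
    intro m z x y w hxy hyw hx hw
    have hstep : ∀ (c : ℕ → Pt) (n : ℕ), (∀ j ≤ n, c j ∈ rowOf X m) →
        (∀ j < n, cAdj i (c j) (c (j+1))) → ∀ j < n, |(c (j+1)).1 - (c j).1| ≤ 1 := by
      intro c n hA hadj j hj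
      have e1 : c j = ((c j).1, m) := pt_eta _ _ (hA j (by omega)).2
      have e2 : c (j+1) = ((c (j+1)).1, m) := pt_eta _ _ (hA (j+1) (by omega)).2
      have h := hadj j hj
      rw [e1, e2] at h
      rw [abs_sub_comm]
      exact (hhoriz _ _ _).mp h
    by_cases hcase : z.1 ≤ y
    · obtain ⟨n, c, hc0, hcn, hcA, hcadj⟩ := hw
      obtain ⟨j, hjn, hje⟩ := ivt n (fun j => (c j).1) (hstep c n hcA hcadj) y
        (Or.inl ⟨show (c 0).1 ≤ y by rw [hc0]; exact hcase,
                 show y ≤ (c n).1 by rw [hcn]; exact hyw⟩)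
      have hje' : (c j).1 = y := hje
      have he : c j = (y, m) := by
        rw [pt_eta (c j) m (hcA j hjn).2, hje']
      exact ⟨j, c, hc0, he, fun o ho => hcA o (ho.trans hjn),
        fun o ho => hcadj o (lt_of_lt_of_le ho hjn)⟩
    · obtain ⟨n, c, hc0, hcn, hcA, hcadj⟩ := hx
      obtain ⟨j, hjn, hje⟩ := ivt n (fun j => (c j).1) (hstep c n hcA hcadj) y
        (Or.inr ⟨show (c n).1 ≤ y by rw [hcn]; exact hxy,
                 show y ≤ (c 0).1 by rw [hc0]; omega⟩)
      have hje' : (c j).1 = y := hje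
      have he : c j = (y, m) := by
        rw [pt_eta (c j) m (hcA j hjn).2, hje']
      exact ⟨j, c, hc0, he, fun o ho => hcA o (ho.trans hjn),
        fun o ho => hcadj o (lt_of_lt_of_le ho hjn)⟩
  -- facts about r and s
  have hp₀r : p₀ ∈ r := by rw [hrdef]; exact chainin_refl hp₀
  have hq₀s : q₀ ∈ s := by rw [hsdef]; exact chainin_refl hq₀
  have hrprop : ∀ p ∈ r, p.2 = k ∧ p ∈ X := fun p hp => comp_row k p₀ p (hrdef ▸ hp)
  have hsprop : ∀ p ∈ s, p.2 = k' ∧ p ∈ X := fun p hp => comp_row k' q₀ p (hsdef ▸ hp)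
  have hrint : ∀ x y w : ℤ, x ≤ y → y ≤ w → (x, k) ∈ r → (w, k) ∈ r → (y, k) ∈ r := by
    intro x y w h1 h2 hx hw
    rw [hrdef] at hx hw ⊢
    exact comp_int k p₀ x y w h1 h2 hx hw
  have hsint : ∀ x y w : ℤ, x ≤ y → y ≤ w → (x, k') ∈ s → (w, k') ∈ s → (y, k') ∈ s := by
    intro x y w h1 h2 hx hw
    rw [hsdef] at hx hw ⊢
    exact comp_int k' q₀ x y w h1 h2 hx hw
  have hmax : ∀ x y : ℤ, (x, k) ∈ r → (y, k) ∈ X → |x - y| ≤ 1 → (y, k) ∈ r := by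
    intro x y hx hy hd
    rw [hrdef] at hx ⊢
    exact chainin_snoc hx ⟨hy, rfl⟩ ((hhoriz x y k).mpr hd)
  obtain ⟨pa, hpa, pb, hpb, hadjab⟩ := hsadj
  have hpa2 : pa.2 = k := (hrprop pa hpa).1
  have hpb2 : pb.2 = k' := (hsprop pb hpb).1
  have pae : pa = (pa.1, k) := pt_eta _ _ hpa2
  have hkne : k' ≠ k := by
    intro he
    have pbe : pb = (pb.1, k) := pt_eta _ _ (by rw [hpb2, he])
    have hadj' := hadjab
    rw [pae, pbe] at hadj'
    have hpbr : (pb.1, k) ∈ r := hmax pa.1 pb.1 (pae ▸ hpa) (pbe ▸ (hsprop pb hpb).2)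
      ((hhoriz _ _ _).mp hadj')
    apply hsne
    have h1 : pb ∈ compOf i (rowOf X k') q₀ := hsdef ▸ hpb
    have h2 : pb ∈ compOf i (rowOf X k) p₀ := hrdef ▸ (pbe.symm ▸ hpbr)
    rw [hsdef, hrdef, compOf_eq_of_mem_s8 h1, compOf_eq_of_mem_s8 h2, he]
  have hk1 : |k - k'| = 1 := by
    have h2 := cadj_snd hadjab
    rw [hpa2, hpb2] at h2
    have h3 := abs_le.mp h2
    rw [abs_eq (by norm_num : (0:ℤ) ≤ 1)]
    omega
  -- the jump size ε
  obtain ⟨ε, hεdef⟩ : ∃ e : ℤ, e = if i = 1 then 0 else 1 := ⟨_, rfl⟩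
  have hε0 : 0 ≤ ε := by rw [hεdef]; split_ifs <;> norm_num
  have hε1 : ε ≤ 1 := by rw [hεdef]; split_ifs <;> norm_num
  have hvert : ∀ u v : ℤ, cAdj i (u, k) (v, k') ↔ |u - v| ≤ ε := by
    intro u v; rw [hεdef]; exact cadj_vert hi hk1 u v
  have hvert' : ∀ u v : ℤ, cAdj i (u, k') (v, k) ↔ |u - v| ≤ ε := by
    intro u v
    constructor
    · intro h; rw [abs_sub_comm]; exact (hvert v u).mp (cadj_symm h)
    · intro h; exact cadj_symm ((hvert v u).mpr (by rwa [abs_sub_comm]))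
  -- q adjacent to r but not in r lies in s
  have hnbr : ∀ q : Pt, q ∈ X → q ∉ r → (∃ p ∈ r, cAdj i p q) → q ∈ s := by
    rintro q hqX hqr ⟨p, hpr, hadj⟩
    have hp2 : p.2 = k := (hrprop p hpr).1
    by_cases hq2 : q.2 = k
    · exfalso
      have pe : p = (p.1, k) := pt_eta _ _ hp2
      have qe : q = (q.1, k) := pt_eta _ _ hq2
      rw [pe, qe] at hadj
      have hmem := hmax p.1 q.1 (pe ▸ hpr) (qe ▸ hqX) ((hhoriz _ _ _).mp hadj)
      exact hqr (by rw [qe]; exact hmem)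
    · have hqrow : q ∈ rowOf X q.2 := ⟨hqX, rfl⟩
      have hrc : IsRowComp i X (compOf i (rowOf X q.2) q) := ⟨q.2, q, hqrow, rfl⟩
      have hne : compOf i (rowOf X q.2) q ≠ r := by
        intro he
        have hp₀' : p₀ ∈ compOf i (rowOf X q.2) q := by rw [he]; exact hp₀r
        have h2 := comp_row q.2 q p₀ hp₀'
        exact hq2 (h2.1 ▸ (hrprop p₀ hp₀r).1)
      have hadj' : setAdj i r (compOf i (rowOf X q.2) q) :=
        ⟨p, hpr, q, chainin_refl hqrow, hadj⟩
      have heq := huq _ ⟨hrc, hne, hadj'⟩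
      rw [← heq]
      exact chainin_refl hqrow
  -- the target row as a set of integers
  set B : Set ℤ := {y | (y, k') ∈ s} with hBdef
  have hBmem : ∀ y : ℤ, y ∈ B ↔ (y, k') ∈ s := fun y => Iff.rfl
  have hBint : ∀ u v w : ℤ, u ∈ B → w ∈ B → u ≤ v → v ≤ w → v ∈ B := by
    intro u v w hu hw h1 h2
    exact (hBmem v).mpr (hsint u v w h1 h2 ((hBmem u).mp hu) ((hBmem w).mp hw))
  -- endpoints of r
  have hAfin : {x : ℤ | (x, k) ∈ r}.Finite :=
    Set.Finite.subset (hrfin.image Prod.fst) (fun x hx => ⟨(x, k), hx, rfl⟩)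
  have hAne' : p₀.1 ∈ {x : ℤ | (x, k) ∈ r} := by
    show (p₀.1, k) ∈ r
    rw [← pt_eta p₀ k hp₀.2]
    exact hp₀r
  obtain ⟨a, hamem, hamin⟩ : ∃ a : ℤ, (a, k) ∈ r ∧ ∀ x : ℤ, (x, k) ∈ r → a ≤ x := by
    have hne : hAfin.toFinset.Nonempty := ⟨p₀.1, hAfin.mem_toFinset.mpr hAne'⟩
    exact ⟨hAfin.toFinset.min' hne, hAfin.mem_toFinset.mp (Finset.min'_mem _ _),
      fun x hx => Finset.min'_le _ _ (hAfin.mem_toFinset.mpr hx)⟩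
  obtain ⟨b, hbmem, hbmax⟩ : ∃ b : ℤ, (b, k) ∈ r ∧ ∀ x : ℤ, (x, k) ∈ r → x ≤ b := by
    have hne : hAfin.toFinset.Nonempty := ⟨p₀.1, hAfin.mem_toFinset.mpr hAne'⟩
    exact ⟨hAfin.toFinset.max' hne, hAfin.mem_toFinset.mp (Finset.max'_mem _ _),
      fun x hx => Finset.le_max' _ _ (hAfin.mem_toFinset.mpr hx)⟩
  have hab : ∀ x : ℤ, (x, k) ∈ r ↔ a ≤ x ∧ x ≤ b :=
    fun x => ⟨fun hx => ⟨hamin x hx, hbmax x hx⟩,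
      fun h => hrint a x b h.1 h.2 hamem hbmem⟩
  -- the landing zone T
  set Tset : Set ℤ := {x | a ≤ x ∧ x ≤ b ∧ ∃ y ∈ B, |x - y| ≤ ε} with hTdef
  have hTmem : ∀ x : ℤ, x ∈ Tset ↔ (a ≤ x ∧ x ≤ b ∧ ∃ y ∈ B, |x - y| ≤ ε) :=
    fun x => Iff.rfl
  have hTint : ∀ x y w : ℤ, x ≤ y → y ≤ w → x ∈ Tset → w ∈ Tset → y ∈ Tset := by
    intro x y w hxy hyw hx hw
    obtain ⟨hax, hxb, yx, hyxB, hyx⟩ := (hTmem x).mp hx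
    obtain ⟨haw, hwb, yw, hywB, hyw'⟩ := (hTmem w).mp hw
    refine (hTmem y).mpr ⟨by omega, by omega, ?_⟩
    have hx1 := abs_sub_le_iff.mp hyx
    have hw1 := abs_sub_le_iff.mp hyw'
    rcases le_total yx yw with hc | hc
    · by_cases h1 : y < yx
      · exact ⟨yx, hyxB, by rw [abs_sub_le_iff]; omega⟩
      · by_cases h2 : yw < y
        · exact ⟨yw, hywB, by rw [abs_sub_le_iff]; omega⟩
        · exact ⟨y, hBint yx y yw hyxB hywB (by omega) (by omega),
            by rw [abs_sub_le_iff]; omega⟩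
    · by_cases h1 : y < yw
      · exact ⟨yw, hywB, by rw [abs_sub_le_iff]; omega⟩
      · by_cases h2 : yx < y
        · exact ⟨yx, hyxB, by rw [abs_sub_le_iff]; omega⟩
        · exact ⟨y, hBint yw y yx hywB hyxB (by omega) (by omega),
            by rw [abs_sub_le_iff]; omega⟩
  have hTfin : Tset.Finite :=
    (Set.finite_Icc a b).subset (fun x hx => Set.mem_Icc.mpr ⟨((hTmem x).mp hx).1, ((hTmem x).mp hx).2.1⟩)
  have hTne' : pa.1 ∈ Tset := by
    have hpbB : pb.1 ∈ B := (hBmem pb.1).mpr ((pt_eta pb k' hpb2) ▸ hpb)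
    have hpaab := (hab pa.1).mp (pae ▸ hpa)
    have hadj' := hadjab
    rw [pae, pt_eta pb k' hpb2] at hadj'
    exact (hTmem pa.1).mpr ⟨hpaab.1, hpaab.2, pb.1, hpbB, (hvert _ _).mp hadj'⟩
  obtain ⟨t₁, ht₁T, ht₁min⟩ : ∃ t : ℤ, t ∈ Tset ∧ ∀ x : ℤ, x ∈ Tset → t ≤ x := by
    have hne : hTfin.toFinset.Nonempty := ⟨pa.1, hTfin.mem_toFinset.mpr hTne'⟩
    exact ⟨hTfin.toFinset.min' hne, hTfin.mem_toFinset.mp (Finset.min'_mem _ _),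
      fun x hx => Finset.min'_le _ _ (hTfin.mem_toFinset.mpr hx)⟩
  obtain ⟨t₂, ht₂T, ht₂max⟩ : ∃ t : ℤ, t ∈ Tset ∧ ∀ x : ℤ, x ∈ Tset → x ≤ t := by
    have hne : hTfin.toFinset.Nonempty := ⟨pa.1, hTfin.mem_toFinset.mpr hTne'⟩
    exact ⟨hTfin.toFinset.max' hne, hTfin.mem_toFinset.mp (Finset.max'_mem _ _),
      fun x hx => Finset.le_max' _ _ (hTfin.mem_toFinset.mpr hx)⟩
  have hT12 : t₁ ≤ t₂ := ht₁min t₂ ht₂T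
  have hTa : a ≤ t₁ := ((hTmem t₁).mp ht₁T).1
  have hTb : t₂ ≤ b := ((hTmem t₂).mp ht₂T).2.1
  have hTiff : ∀ x : ℤ, x ∈ Tset ↔ t₁ ≤ x ∧ x ≤ t₂ :=
    fun x => ⟨fun hx => ⟨ht₁min x hx, ht₂max x hx⟩,
      fun h => hTint t₁ x t₂ h.1 h.2 ht₁T ht₂T⟩
  have hclampT : ∀ x : ℤ, clampI t₁ t₂ x ∈ Tset :=
    fun x => (hTiff _).mpr (clampI_range hT12)
  have hTcond : ∀ x : ℤ, x ∈ Tset → (x - 1 ∈ B ∨ x ∈ B ∨ x + 1 ∈ B) := by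
    intro x hx
    obtain ⟨_, _, y, hyB, hxy⟩ := (hTmem x).mp hx
    have h1 := abs_sub_le_iff.mp hxy
    have : y = x - 1 ∨ y = x ∨ y = x + 1 := by omega
    rcases this with he | he | he
    · exact Or.inl (he ▸ hyB)
    · exact Or.inr (Or.inl (he ▸ hyB))
    · exact Or.inr (Or.inr (he ▸ hyB))
  have hsigid : i = 1 → ∀ x : ℤ, x ∈ Tset → sig B x = x := by
    intro h1 x hx
    obtain ⟨_, _, y, hyB, hxy⟩ := (hTmem x).mp hx
    have he : ε = 0 := by rw [hεdef, if_pos h1]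
    rw [he] at hxy
    have h2 := abs_le.mp hxy
    have : y = x := by omega
    exact sig_id (this ▸ hyB)
  -- the number of steps
  obtain ⟨M, hMdef⟩ : ∃ M : ℕ, M = (max (t₁ - a) (b - t₂)).toNat := ⟨_, rfl⟩
  have hM1 : t₁ - (M : ℤ) ≤ a := by
    have h1 : (t₁ - a) ≤ ((max (t₁ - a) (b - t₂)).toNat : ℤ) :=
      le_trans (le_max_left _ _) (Int.self_le_toNat _)
    rw [hMdef]; omega
  have hM2 : b ≤ t₂ + (M : ℤ) := by
    have h1 : (b - t₂) ≤ ((max (t₁ - a) (b - t₂)).toNat : ℤ) :=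
      le_trans (le_max_right _ _) (Int.self_le_toNat _)
    rw [hMdef]; omega
  obtain ⟨N, hNdef⟩ : ∃ N : ℕ, N = M + 1 := ⟨_, rfl⟩
  -- the deformation
  obtain ⟨Hval, hHdef⟩ : ∃ F : Pt → ℕ → Pt, F = fun (p : Pt) (t : ℕ) =>
      if p ∈ r then
        (if t = 0 then (sig B (clampI t₁ t₂ p.1), k')
         else (clampI (t₁ - ((t : ℤ) - 1)) (t₂ + ((t : ℤ) - 1)) p.1, k))
      else p := ⟨_, rfl⟩
  have hH0r : ∀ p : Pt, p ∈ r → Hval p 0 = (sig B (clampI t₁ t₂ p.1), k') := by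
    intro p hp; rw [hHdef]; simp only [if_pos hp]; simp
  have hHtr : ∀ (p : Pt) (t : ℕ), p ∈ r → t ≠ 0 →
      Hval p t = (clampI (t₁ - ((t : ℤ) - 1)) (t₂ + ((t : ℤ) - 1)) p.1, k) := by
    intro p t hp ht; rw [hHdef]; simp only [if_pos hp, if_neg ht]
  have hHnr : ∀ (p : Pt) (t : ℕ), p ∉ r → Hval p t = p := by
    intro p t hp; rw [hHdef]; simp only [if_neg hp]
  -- memberships
  have hHmem0 : ∀ p : Pt, p ∈ X → Hval p 0 ∈ X \ r := by
    intro p hpX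
    by_cases hp : p ∈ r
    · rw [hH0r p hp]
      have hmem : sig B (clampI t₁ t₂ p.1) ∈ B := sig_mem (hTcond _ (hclampT p.1))
      refine ⟨(hsprop _ ((hBmem _).mp hmem)).2, ?_⟩
      intro hcon
      exact hkne (hrprop _ hcon).1
    · rw [hHnr p 0 hp]; exact ⟨hpX, hp⟩
  have hHmemX : ∀ p : Pt, p ∈ X → ∀ t : ℕ, Hval p t ∈ X := by
    intro p hpX t
    by_cases hp : p ∈ r
    · by_cases ht : t = 0
      · subst ht
        exact (hHmem0 p hpX).1
      · rw [hHtr p t hp ht]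
        have htz : 1 ≤ t := Nat.one_le_iff_ne_zero.mpr ht
        have hpa' := (hab p.1).mp ((pt_eta p k (hrprop p hp).1) ▸ hp)
        have hc1 : (1:ℤ) ≤ (t:ℤ) := by exact_mod_cast htz
        have hcl : a ≤ clampI (t₁ - ((t:ℤ) - 1)) (t₂ + ((t:ℤ) - 1)) p.1 ∧
            clampI (t₁ - ((t:ℤ) - 1)) (t₂ + ((t:ℤ) - 1)) p.1 ≤ b :=
          clampI_mem (by omega) (by omega) hpa'.1 hpa'.2
        exact (hrprop _ ((hab _).mpr hcl)).2
    · rw [hHnr p t hp]; exact hpX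
  -- the key adjacency-preservation lemma
  have key : ∀ p q : Pt, p ∈ X → q ∈ X → cAdj i p q → ∀ tp tq : ℕ, tp ≤ N → tq ≤ N →
      tp ≤ tq → tq ≤ tp + 1 → (i = 1 → (tp = tq ∨ p = q)) →
      cAdj i (Hval p tp) (Hval q tq) := by
    intro p q hpX hqX hadj tp tq htpN htqN hle hle1 hi1
    by_cases hp : p ∈ r <;> by_cases hq : q ∈ r
    · -- both in r
      have pe : p = (p.1, k) := pt_eta _ _ (hrprop p hp).1
      have qe : q = (q.1, k) := pt_eta _ _ (hrprop q hq).1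
      have hxx : |p.1 - q.1| ≤ 1 := (hhoriz _ _ k).mp (by rw [pe, qe] at hadj; exact hadj)
      have hcxT : clampI t₁ t₂ p.1 ∈ Tset := hclampT p.1
      have hcx'T : clampI t₁ t₂ q.1 ∈ Tset := hclampT q.1
      have hcc : |clampI t₁ t₂ p.1 - clampI t₁ t₂ q.1| ≤ 1 :=
        clampI_diff hT12 hT12 hxx (by simp) (by simp)
      rcases Nat.eq_zero_or_pos tp with h0 | h1
      · subst h0
        rcases Nat.eq_zero_or_pos tq with h0' | h1'
        · subst h0'
          rw [hH0r p hp, hH0r q hq]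
          exact (hhoriz _ _ k').mpr (sig_cont hBint (hTcond _ hcxT) (hTcond _ hcx'T) hcc)
        · have htq1 : tq = 1 := by omega
          rw [hH0r p hp, hHtr q tq hq (by omega)]
          have e1 : t₁ - ((tq : ℤ) - 1) = t₁ := by
            have : tq = 1 := htq1
            subst this; norm_num
          have e2 : t₂ + ((tq : ℤ) - 1) = t₂ := by
            have : tq = 1 := htq1
            subst this; norm_num
          rw [e1, e2]
          apply (hvert' _ _).mpr
          rcases hi with hi' | hi'
          · rcases hi1 hi' with he | he
            · exfalso; omega
            · subst he
              rw [hsigid hi' _ hcxT, sub_self, abs_zero]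
              exact hε0
          · have he : ε = 1 := by rw [hεdef, if_neg (by omega)]
            rw [he]
            exact sig_near2 hBint (hTcond _ hcxT) (hTcond _ hcx'T) hcc
      · have h1' : 1 ≤ tq := le_trans h1 hle
        rw [hHtr p tp hp (by omega), hHtr q tq hq (by omega)]
        apply (hhoriz _ _ k).mpr
        have hc1 : (1:ℤ) ≤ (tp:ℤ) := by exact_mod_cast h1
        have hc2 : (1:ℤ) ≤ (tq:ℤ) := by exact_mod_cast h1'
        have hc3 : (tp:ℤ) ≤ (tq:ℤ) := by exact_mod_cast hle
        have hc4 : (tq:ℤ) ≤ (tp:ℤ) + 1 := by exact_mod_cast hle1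
        exact clampI_diff (by omega) (by omega) hxx
          (by rw [abs_sub_le_iff]; omega) (by rw [abs_sub_le_iff]; omega)
    · -- p in r, q outside r (hence in s)
      have hqs : q ∈ s := hnbr q hqX hq ⟨p, hp, hadj⟩
      have qe : q = (q.1, k') := pt_eta _ _ (hsprop q hqs).1
      have pe : p = (p.1, k) := pt_eta _ _ (hrprop p hp).1
      have hqB : q.1 ∈ B := (hBmem q.1).mpr (qe ▸ hqs)
      have hxy : |p.1 - q.1| ≤ ε := (hvert _ _).mp (by rw [pe, qe] at hadj; exact hadj)
      have hpa' := (hab p.1).mp (pe ▸ hp)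
      have hxT : p.1 ∈ Tset := (hTmem p.1).mpr ⟨hpa'.1, hpa'.2, q.1, hqB, hxy⟩
      have hxt := (hTiff p.1).mp hxT
      rw [hHnr q tq hq]
      rcases Nat.eq_zero_or_pos tp with h0 | h1
      · subst h0
        rw [hH0r p hp, clampI_eq_self hxt.1 hxt.2, qe]
        exact (hhoriz _ _ k').mpr (sig_near hBint (hTcond _ hxT) hqB (le_trans hxy hε1))
      · rw [hHtr p tp hp (by omega)]
        have hc1 : (1:ℤ) ≤ (tp:ℤ) := by exact_mod_cast h1
        have hcs : clampI (t₁ - ((tp:ℤ) - 1)) (t₂ + ((tp:ℤ) - 1)) p.1 = p.1 :=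
          clampI_eq_self (by omega) (by omega)
        rw [hcs, ← pe]
        exact hadj
    · -- q in r, p outside r (hence in s)
      have hps : p ∈ s := hnbr p hpX hp ⟨q, hq, cadj_symm hadj⟩
      have pe : p = (p.1, k') := pt_eta _ _ (hsprop p hps).1
      have qe : q = (q.1, k) := pt_eta _ _ (hrprop q hq).1
      have hpB : p.1 ∈ B := (hBmem p.1).mpr (pe ▸ hps)
      have hxy : |q.1 - p.1| ≤ ε :=
        (hvert _ _).mp (by rw [pe, qe] at hadj; exact cadj_symm hadj)
      have hqa' := (hab q.1).mp (qe ▸ hq)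
      have hxT : q.1 ∈ Tset := (hTmem q.1).mpr ⟨hqa'.1, hqa'.2, p.1, hpB, hxy⟩
      have hxt := (hTiff q.1).mp hxT
      rw [hHnr p tp hp]
      rcases Nat.eq_zero_or_pos tq with h0 | h1
      · subst h0
        rw [hH0r q hq, clampI_eq_self hxt.1 hxt.2, pe]
        apply (hhoriz _ _ k').mpr
        rw [abs_sub_comm]
        exact sig_near hBint (hTcond _ hxT) hpB (le_trans hxy hε1)
      · rw [hHtr q tq hq (by omega)]
        have hc1 : (1:ℤ) ≤ (tq:ℤ) := by exact_mod_cast h1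
        have hcs : clampI (t₁ - ((tq:ℤ) - 1)) (t₂ + ((tq:ℤ) - 1)) q.1 = q.1 :=
          clampI_eq_self (by omega) (by omega)
        rw [hcs, ← qe]
        exact hadj
    · rw [hHnr p tp hp, hHnr q tq hq]
      exact hadj
  have key2 : ∀ p q : Pt, p ∈ X → q ∈ X → cAdj i p q → ∀ tp tq : ℕ, tp ≤ N → tq ≤ N →
      natAdj tp tq → (i = 1 → (tp = tq ∨ p = q)) → cAdj i (Hval p tp) (Hval q tq) := by
    intro p q hp hq hadj tp tq h1 h2 hnat hcond
    rcases hnat with he | he | he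
    · subst he
      exact key p q hp hq hadj tp tp h1 h2 le_rfl (by omega) hcond
    · exact key p q hp hq hadj tp tq h1 h2 (by omega) (by omega) hcond
    · refine cadj_symm (key q p hq hp (cadj_symm hadj) tq tp h2 h1 (by omega) (by omega) ?_)
      intro hh
      rcases hcond hh with he' | he'
      · exact Or.inl he'.symm
      · exact Or.inr he'.symm
  -- assemble the homotopy equivalence
  refine ⟨fun x => ⟨Hval x.1 0, hHmem0 x.1 x.2⟩, fun y => ⟨y.1, y.2.1⟩, ?_, ?_, ?_, ?_⟩
  · intro x y hxy
    exact key2 x.1 y.1 x.2 y.2 hxy 0 0 (by omega) (by omega) (Or.inl rfl) (fun _ => Or.inl rfl)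
  · intro x y hxy
    exact hxy
  · refine ⟨N, fun x t => ⟨Hval x.1 t, hHmemX x.1 x.2 t⟩, fun x => rfl,
      fun x => Subtype.ext ?_, ?_⟩
    · show Hval x.1 N = x.1
      by_cases hx : x.1 ∈ r
      · rw [hHtr _ N hx (by omega)]
        have pe : x.1 = (x.1.1, k) := pt_eta _ _ (hrprop _ hx).1
        have hpa' := (hab x.1.1).mp (pe ▸ hx)
        have hNe : (N : ℤ) = (M : ℤ) + 1 := by rw [hNdef]; push_cast; ring
        have hcs : clampI (t₁ - ((N:ℤ) - 1)) (t₂ + ((N:ℤ) - 1)) x.1.1 = x.1.1 :=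
          clampI_eq_self (by omega) (by omega)
        rw [hcs, ← pe]
      · rw [hHnr _ N hx]
    · intro x y sT tT hs ht hpadj
      have hextract : cAdj i x.1 y.1 ∧ natAdj sT tT ∧ (i = 1 → sT = tT ∨ x.1 = y.1) := by
        rcases hi with h' | h' <;> subst h' <;>
          simp only [prodAdj, reduceIte] at hpadj
        · rcases hpadj with ⟨hk', he⟩ | ⟨he, hn⟩
          · exact ⟨hk', Or.inl he, fun _ => Or.inl he⟩
          · refine ⟨?_, hn, fun _ => Or.inr (congrArg Subtype.val he)⟩
            rw [he]
            exact cadj_refl _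
        · refine ⟨hpadj.1, hpadj.2, fun h1 => ?_⟩
          exfalso; omega
      obtain ⟨ha', hn', hc'⟩ := hextract
      exact key2 x.1 y.1 x.2 y.2 ha' sT tT hs ht hn' hc'
  · refine ⟨0, fun x _ => x, fun x => Subtype.ext ?_, fun x => rfl, ?_⟩
    · show x.1 = Hval x.1 0
      rw [hHnr _ 0 x.2.2]
    · intro x y sT tT hs ht hpadj
      rcases hi with h' | h' <;> subst h' <;>
        simp only [prodAdj, reduceIte] at hpadj
      · rcases hpadj with ⟨hk', _⟩ | ⟨he, _⟩
        · exact hk'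
        · rw [show x = y from he]
          exact cadj_refl _
      · exact hpadj.1
end
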